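/- arXiv:1209.5454 — 8 statements merged into one kernel-verified Lean document; each statement's English description precedes it below -/
import Mathlib

section
/- Let X be a topological space and let F be a finite subset of X such that X ∖ F is disconnected. Then X is not (|F| + 2)-strongly arc connected. -/
open Set Topology

/-- `X` is `n`-strongly arc connected: for every `n` distinct points there is an
arc (topological embedding of `[0,1]`) visiting them in order. -/
def NSac (X : Type*) [TopologicalSpace X] (n : ℕ) : Prop :=
  ∀ x : Fin n → X, Function.Injective x →
    ∃ (α : unitInterval → X) (t : Fin n → unitInterval),
      Topology.IsEmbedding α ∧ StrictMono t ∧ ∀ i, α (t i) = x i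

/-! Choose points `a`, `b` of `Fᶜ` that no preconnected subset of `Fᶜ` joins, and ask for an arc
through `a`, then `b`, then all points of `F`. Since the arc is injective, its piece from `a` to `b`
misses `F`; it is a preconnected subset of `Fᶜ` containing `a` and `b`, a contradiction. -/

theorem Function.Injective.disjoint_image_Iic {ι X : Type*} [Preorder ι] {α : ι → X}
    (hα : Function.Injective α) {c : ι} {F : Set X} (hF : F ⊆ α '' Ioi c) :
    Disjoint (α '' Iic c) F :=
  ((disjoint_image_iff hα).2 (Iic_disjoint_Ioi le_rfl)).mono_right hF

theorem exists_pair_not_joined_of_not_isPreconnected {X : Type*} [TopologicalSpace X]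
    {s : Set X} (hs : ¬ IsPreconnected s) :
    ∃ a ∈ s, ∃ b ∈ s, ∀ t ⊆ s, a ∈ t → b ∈ t → ¬ IsPreconnected t := by
  contrapose! hs
  exact isPreconnected_of_forall_pair fun a ha b hb => by simpa [and_assoc] using hs a ha b hb

theorem Set.Finite.exists_injective_tuple_starting_with {X : Type*} {F : Set X} (hF : F.Finite)
    {a b : X} (hab : a ≠ b) (ha : a ∉ F) (hb : b ∉ F) :
    ∃ x : Fin (F.ncard + 2) → X, Function.Injective x ∧ x 0 = a ∧ x 1 = b ∧
      F ⊆ x '' Ioi 1 := by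
  have : Finite F := hF.to_subtype
  let e : F ≃ Fin F.ncard := Finite.equivFinOfCardEq (Nat.card_coe_set_eq F)
  let f : Fin F.ncard → X := fun i => e.symm i
  have hfF : range f = F := by
    ext y
    exact ⟨by rintro ⟨i, rfl⟩; exact (e.symm i).2, fun hy => ⟨e ⟨y, hy⟩, by simp [f]⟩⟩
  refine ⟨Fin.cons a (Fin.cons b f), ?_, rfl, rfl, ?_⟩
  · rw [Fin.cons_injective_iff, Fin.cons_injective_iff, Fin.range_cons, hfF]
    exact ⟨by rintro (rfl | h) <;> contradiction, hb,
      fun i j h => e.symm.injective (Subtype.ext h)⟩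
  · intro y hy
    obtain ⟨i, rfl⟩ : y ∈ range f := hfF.symm ▸ hy
    exact ⟨i.succ.succ, Fin.succ_lt_succ_iff.2 (Fin.succ_pos i), rfl⟩

/-- If `F` is a finite subset of `X` such that `X \ F` is disconnected,
then `X` is not `(|F| + 2)`-strongly arc connected. -/
theorem not_nsac_of_finite_cut (X : Type*) [TopologicalSpace X] (F : Set X)
    (hF : F.Finite) (hdis : ¬ IsPreconnected Fᶜ) :
    ¬ NSac X (F.ncard + 2) := by
  intro hsac
  obtain ⟨a, ha, b, hb, hab⟩ := exists_pair_not_joined_of_not_isPreconnected hdis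
  have hne : a ≠ b := by
    rintro rfl
    exact hab {a} (singleton_subset_iff.2 ha) rfl rfl isPreconnected_singleton
  obtain ⟨x, hx, hx0, hx1, hFx⟩ := hF.exists_injective_tuple_starting_with hne ha hb
  obtain ⟨α, t, hα, ht, hαt⟩ := hsac x hx
  have h01 : t 0 ≤ t 1 := ht.monotone (Fin.zero_le _)
  have hF_late : F ⊆ α '' Ioi (t 1) := by
    intro y hy
    obtain ⟨k, hk, rfl⟩ := hFx hy
    exact ⟨t k, ht hk, hαt k⟩
  have hsub : α '' Icc (t 0) (t 1) ⊆ Fᶜ :=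
    (image_mono Icc_subset_Iic_self).trans
      (hα.injective.disjoint_image_Iic hF_late).subset_compl_right
  exact hab _ hsub ⟨t 0, ⟨le_rfl, h01⟩, (hαt 0).trans hx0⟩
    ⟨t 1, ⟨h01, le_rfl⟩, (hαt 1).trans hx1⟩
    (isPreconnected_Icc.image α hα.continuous.continuousOn)
end

section
/- Let X be a topological space and let U be a nonempty open subset of X whose closure is not all of X and whose topological boundary ∂U is finite. Then X is not (|∂U| + 2)-strongly arc connected. -/
/-!
Pick `a ∈ U` and `b ∉ closure U`, and ask for an arc through `a`, `b` and then all the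
boundary points, in this order. The sub-arc from `a` to `b` is connected, so it meets `∂U`;
but every boundary point is visited strictly after `b`, and an arc never returns to a point.
-/

open Set Topology

section

variable {X : Type*} [TopologicalSpace X]

theorem IsPreconnected.inter_frontier_nonempty {C s : Set X}
    (hC : IsPreconnected C) (hCs : (C ∩ s).Nonempty) (hCs' : (C \ s).Nonempty) :
    (C ∩ frontier s).Nonempty := by
  by_contra h
  have hsub : C ⊆ interior s ∪ (closure s)ᶜ := fun z hz => by
    by_contra hz'
    simp only [mem_union, mem_compl_iff, not_or, not_not] at hz'
    exact h ⟨z, hz, hz'.2, hz'.1⟩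
  obtain ⟨a, haC, has⟩ := hCs
  obtain ⟨b, hbC, hbs⟩ := hCs'
  have ha : a ∈ interior s := (hsub haC).resolve_right fun h' => h' (subset_closure has)
  have hb : b ∈ (closure s)ᶜ := (hsub hbC).resolve_left fun h' => hbs (interior_subset h')
  obtain ⟨z, -, hzi, hzc⟩ := hC _ _ isOpen_interior isClosed_closure.isOpen_compl hsub
    ⟨a, haC, ha⟩ ⟨b, hbC, hb⟩
  exact hzc (interior_subset_closure hzi)

theorem NSac.exists_isPreconnected_of_le {n : ℕ} (h : NSac X n) {x : Fin n → X}
    (hx : Function.Injective x) {i j : Fin n} (hij : i ≤ j) :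
    ∃ C : Set X, IsPreconnected C ∧ x i ∈ C ∧ x j ∈ C ∧ ∀ k, j < k → x k ∉ C := by
  obtain ⟨α, t, hα, ht, hαt⟩ := h x hx
  refine ⟨α '' Icc (t i) (t j), isPreconnected_Icc.image _ hα.continuous.continuousOn,
    ⟨t i, ⟨le_rfl, ht.monotone hij⟩, hαt i⟩, ⟨t j, ⟨ht.monotone hij, le_rfl⟩, hαt j⟩, ?_⟩
  rintro k hjk ⟨r, hr, hrk⟩
  have hr_eq : r = t k := hα.injective (hrk.trans (hαt k).symm)
  exact (hr.2.trans_lt (ht hjk)).ne hr_eq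

theorem NSac.exists_isPreconnected_disjoint {s : Set X} (hs : s.Finite)
    (h : NSac X (s.ncard + 2)) {a b : X} (ha : a ∉ s) (hb : b ∉ s) (hab : a ≠ b) :
    ∃ C : Set X, IsPreconnected C ∧ a ∈ C ∧ b ∈ C ∧ Disjoint C s := by
  have : Finite s := hs.to_subtype
  let e : Fin s.ncard ≃ s := (Nat.card_coe_set_eq s ▸ Finite.equivFin s).symm
  let x : Fin (s.ncard + 2) → X := Fin.cons a (Fin.cons b fun k => e k)
  have hrange : range (fun k => (e k : X)) = s := by
    rw [show (fun k => (e k : X)) = Subtype.val ∘ e from rfl, range_comp, e.range_eq_univ,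
      image_univ, Subtype.range_coe]
  have hx : Function.Injective x := by
    simp only [x, Fin.cons_injective_iff, Fin.range_cons, hrange, mem_insert_iff, not_or]
    exact ⟨⟨hab, ha⟩, hb, Subtype.val_injective.comp e.injective⟩
  obtain ⟨C, hC, haC, hbC, hCx⟩ := h.exists_isPreconnected_of_le hx (i := 0) (j := 1) zero_le_one
  refine ⟨C, hC, haC, hbC, disjoint_right.2 fun y hy hyC => ?_⟩
  obtain ⟨k, hk⟩ := e.surjective ⟨y, hy⟩
  have hxk : x k.succ.succ = y := by simp [x, hk]
  exact hCx k.succ.succ (by simp [Fin.lt_def]) (hxk ▸ hyC)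

end

/-- If `U` is a nonempty open set whose closure is not all of `X` and whose
boundary is finite, then `X` is not `(|∂U| + 2)`-strongly arc connected. -/
theorem not_nsac_of_open_finite_boundary (X : Type*) [TopologicalSpace X] (U : Set X)
    (hUopen : IsOpen U) (hUne : U.Nonempty) (hUnd : closure U ≠ Set.univ)
    (hbd : (frontier U).Finite) :
    ¬ NSac X ((frontier U).ncard + 2) := by
  intro hsac
  obtain ⟨a, ha⟩ := hUne
  obtain ⟨b, hb⟩ := nonempty_compl.2 hUnd
  have ha' : a ∉ frontier U := by
    rw [hUopen.frontier_eq]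
    exact fun h => h.2 ha
  have hb' : b ∉ frontier U := fun h => hb (frontier_subset_closure h)
  obtain ⟨C, hC, haC, hbC, hCU⟩ := hsac.exists_isPreconnected_disjoint hbd ha' hb'
    (ne_of_mem_of_not_mem (subset_closure ha) hb)
  obtain ⟨y, hyC, hyU⟩ :=
    hC.inter_frontier_nonempty ⟨a, haC, ha⟩ ⟨b, hbC, fun h => hb (subset_closure h)⟩
  exact hCU.ne_of_mem hyC hyU rfl
end

section
/- If a continuum X contains a free arc, then X is not 4-strongly arc connected. -/
/-!
Let `α` be a free arc, `0 < c < d < 1`, and suppose an arc `β` passes through `α 0`, `α d`, `α c`,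
`α 1` at times `t₀ < t₁ < t₂ < t₃`. Go back from `t₂` to the last time `a` at which `β` is outside
the open set `U = α (0, 1)` (or to `a = 0` if there is none). Since `range α` is closed, `β` stays
in the arc on `[a, t₂]`, so reading it in the coordinate of `α` gives a continuous path to which
the intermediate value theorem applies. If `a ≤ t₀`, the coordinate goes from `0` to `d` on
`[t₀, t₁]`, so `β` passes through `α c = β t₂` before `t₂`. Otherwise `a ≠ 0`, so `β a` is an endpoint
of `α`, so `a` is `t₀` or `t₃`, neither of which lies in `(t₀, t₂]`.
-/

open Set Topology

open Function

theorem Topology.IsEmbedding.continuousOn_invFun {X Y : Type*} [TopologicalSpace X]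
    [TopologicalSpace Y] [Nonempty X] {f : X → Y} (hf : IsEmbedding f) :
    ContinuousOn (invFun f) (range f) := by
  rw [continuousOn_iff_continuous_domRestrict]
  convert hf.toHomeomorph.symm.continuous
  ext ⟨_, x, rfl⟩
  rw [hf.toHomeomorph.eq_symm_apply]
  exact congrArg hf.toHomeomorph (leftInverse_invFun hf.injective x)

theorem Topology.IsEmbedding.image_uIcc_subset {X Y Z : Type*} [TopologicalSpace X]
    [LinearOrder Y] [TopologicalSpace Y] [OrderClosedTopology Y]
    [ConditionallyCompleteLinearOrder Z] [TopologicalSpace Z] [OrderTopology Z]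
    [DenselyOrdered Z] {α : Y → X} (hα : IsEmbedding α) {β : Z → X} {x y : Z}
    (hβ : ContinuousOn β (uIcc x y)) (hmaps : MapsTo β (uIcc x y) (range α)) {u v : Y}
    (hx : β x = α u) (hy : β y = α v) :
    α '' uIcc u v ⊆ β '' uIcc x y := by
  have : Nonempty Y := ⟨u⟩
  have hg := intermediate_value_uIcc (hα.continuousOn_invFun.comp hβ hmaps)
  simp only [comp_apply, hx, hy, leftInverse_invFun hα.injective _] at hg
  rintro _ ⟨q, hq, rfl⟩
  obtain ⟨s, hs, rfl⟩ := hg hq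
  exact ⟨s, hs, (invFun_eq (hmaps hs)).symm⟩

theorem exists_Ioc_subset_of_isOpen {Z : Type*} [CompleteLinearOrder Z] [TopologicalSpace Z]
    [OrderTopology Z] {S : Set Z} (hS : IsOpen S) (t : Z) :
    ∃ a ≤ t, Ioc a t ⊆ S ∧ (a = ⊥ ∨ a ∉ S) := by
  set T := Iic t ∩ Sᶜ
  refine ⟨sSup T, sSup_le fun _ h ↦ h.1,
    fun s hs ↦ by_contra fun hsS ↦ hs.1.not_ge (le_sSup ⟨hs.2, hsS⟩), ?_⟩
  rcases T.eq_empty_or_nonempty with hT | hT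
  · exact .inl (by rw [hT, sSup_empty])
  · exact .inr ((isClosed_Iic.inter hS.isClosed_compl).sSup_mem hT).2

theorem exists_Icc_mapsTo_of_isOpen {X Z : Type*} [TopologicalSpace X] [CompleteLinearOrder Z]
    [TopologicalSpace Z] [OrderTopology Z] [DenselyOrdered Z] {β : Z → X} (hβ : Continuous β)
    {U A : Set X} (hU : IsOpen U) (hA : IsClosed A) (hUA : U ⊆ A) {t : Z} (ht : β t ∈ U) :
    ∃ a ≤ t, MapsTo β (Icc a t) A ∧ (a = ⊥ ∨ β a ∈ A \ U) := by
  obtain ⟨a, hat, hsub, ha⟩ := exists_Ioc_subset_of_isOpen (hU.preimage hβ) t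
  have hmaps : MapsTo β (Icc a t) A := by
    rcases hat.eq_or_lt with rfl | hlt
    · simpa using hUA ht
    · rw [← closure_Ioc hlt.ne]
      exact (hA.preimage hβ).closure_subset_iff.mpr (hsub.trans (preimage_mono hUA))
  exact ⟨a, hat, hmaps, ha.imp_right fun h ↦ ⟨hmaps ⟨le_rfl, hat⟩, h⟩⟩

theorem free_arc_not_visited_in_order {X : Type*} [TopologicalSpace X] [T2Space X]
    {α : unitInterval → X} (hα : IsEmbedding α) (hU : IsOpen (range α \ {α 0, α 1}))
    {β : unitInterval → X} (hβ : IsEmbedding β) {c d : unitInterval} (hc : 0 < c) (hcd : c < d)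
    {t₀ t₁ t₂ t₃ : unitInterval} (h₀₁ : t₀ < t₁) (h₁₂ : t₁ < t₂) (h₂₃ : t₂ < t₃)
    (hβ₀ : β t₀ = α 0) (hβ₁ : β t₁ = α d) (hβ₂ : β t₂ = α c) (hβ₃ : β t₃ = α 1) : False := by
  have hc₂ : β t₂ ∈ range α \ {α 0, α 1} := by
    simp [hβ₂, hα.injective.eq_iff, hc.ne', (hcd.trans_le unitInterval.le_one').ne]
  obtain ⟨a, ha₂, hmaps, ha⟩ := exists_Icc_mapsTo_of_isOpen hβ.continuous hU
    (isCompact_range hα.continuous).isClosed sdiff_subset hc₂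
  rcases le_or_gt a t₀ with ha₀ | ha₀
  · have hsub : uIcc t₀ t₁ ⊆ Icc a t₂ :=
      uIcc_subset_Icc ⟨ha₀, (h₀₁.trans h₁₂).le⟩ ⟨ha₀.trans h₀₁.le, h₁₂.le⟩
    obtain ⟨s, hs, hsc⟩ := hα.image_uIcc_subset hβ.continuous.continuousOn (hmaps.mono_left hsub)
      hβ₀ hβ₁ (mem_image_of_mem α ⟨inf_le_left.trans hc.le, hcd.le.trans le_sup_right⟩)
    obtain rfl : s = t₂ := hβ.injective (hsc.trans hβ₂.symm)
    exact (le_sup_iff.mp hs.2).elim (h₀₁.trans h₁₂).not_ge h₁₂.not_ge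
  · rw [sdiff_sdiff_right_self] at ha
    rcases ha with rfl | ⟨-, ha⟩
    · exact (bot_le (a := t₀)).not_gt ha₀
    · simp only [← hβ₀, ← hβ₃, mem_insert_iff, mem_singleton_iff, hβ.injective.eq_iff] at ha
      rcases ha with rfl | rfl
      exacts [ha₀.false, h₂₃.not_ge ha₂]

theorem not_four_sac_of_free_arc_general (X : Type*) [TopologicalSpace X]
    [TopologicalSpace.MetrizableSpace X]
    (hfree : ∃ α : unitInterval → X, Topology.IsEmbedding α ∧
      IsOpen (Set.range α \ {α 0, α 1})) :
    ¬ NSac X 4 := by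
  intro h4
  obtain ⟨α, hα, hU⟩ := hfree
  obtain ⟨c, hc, hc1⟩ := exists_between (zero_lt_one' unitInterval)
  obtain ⟨d, hcd, hd1⟩ := exists_between hc1
  have hinj : Injective ![(0 : unitInterval), d, c, 1] := by
    simp only [Matrix.vecCons, Fin.cons_injective_iff]
    simp [hc.ne, hcd.ne', (hc.trans hcd).ne, hd1.ne, hc1.ne, injective_of_subsingleton]
  obtain ⟨β, t, hβ, ht, hβt⟩ := h4 _ (hα.injective.comp hinj)
  exact free_arc_not_visited_in_order hα hU hβ hc hcd (ht (show (0 : Fin 4) < 1 by decide))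
    (ht (show (1 : Fin 4) < 2 by decide)) (ht (show (2 : Fin 4) < 3 by decide))
    (hβt 0) (hβt 1) (hβt 2) (hβt 3)

/-- A continuum containing a free arc (an arc which, minus its two endpoints,
is open in the space) is not `4`-strongly arc connected. -/
theorem not_four_sac_of_free_arc (X : Type*) [TopologicalSpace X] [CompactSpace X]
    [ConnectedSpace X] [TopologicalSpace.MetrizableSpace X]
    (hfree : ∃ α : unitInterval → X, Topology.IsEmbedding α ∧
      IsOpen (Set.range α \ {α 0, α 1})) :
    ¬ NSac X 4 :=
  not_four_sac_of_free_arc_general X hfree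
end

section
/- Let X be a compact Hausdorff space, let I ⊆ ℝ be an interval containing more than one point, and let f : I → X be a continuous bijection. Then X is not 4-strongly arc connected. -/
/-!
The interval `I` is σ-compact, so by the Baire category theorem one of the countably many closed
sets `f '' K` (`K ⊆ I` compact) covering `X` has an interior point. Since `f` is injective, `f`
is then open on a nondegenerate interval `[u, v] ⊆ I`: every `f '' (t₂, t₄)` with
`u ≤ t₂ < t₄ ≤ v` is open, and so is the complement of the compact set `f '' [t₂, t₄]`.
For `t₁ < t₂ < t₃ < t₄`, an arc through `f t₁, f t₃, f t₂, f t₄` in this order contains a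
connected set joining `f t₁` to `f t₃` that misses `f t₂` and `f t₄`; it is covered by these two
disjoint open sets and meets both, which is impossible.
-/

open Set Topology

theorem Set.OrdConnected.isLocallyClosed {α : Type*} [ConditionallyCompleteLinearOrder α]
    [TopologicalSpace α] [OrderTopology α] [DenselyOrdered α] {s : Set α}
    (hs : s.OrdConnected) : IsLocallyClosed s := by
  rcases hs.isPreconnected.mem_intervals with h | h | h | h | h | h | h | h | h | h <;> rw [h]
  exacts [isLocallyClosed_Icc, isLocallyClosed_Ico, isLocallyClosed_Ioc, isLocallyClosed_Ioo,
    isLocallyClosed_Ici, isLocallyClosed_Ioi, isLocallyClosed_Iic, isLocallyClosed_Iio,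
    isClosed_univ.isLocallyClosed, isClosed_empty.isLocallyClosed]

theorem exists_isCompact_nonempty_interior_image {Y X : Type*} [TopologicalSpace Y]
    [TopologicalSpace X] [SigmaCompactSpace Y] [BaireSpace X] [T2Space X] [Nonempty X]
    {f : Y → X} (hf : Continuous f) (hsurj : Function.Surjective f) :
    ∃ K, IsCompact K ∧ (interior (f '' K)).Nonempty := by
  obtain ⟨n, hn⟩ := nonempty_interior_of_iUnion_of_closed
    (fun n => ((isCompact_compactCovering Y n).image hf).isClosed)
    (by rw [← image_iUnion, iUnion_compactCovering, image_univ, hsurj.range_eq])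
  exact ⟨_, isCompact_compactCovering Y n, hn⟩

theorem isOpen_image_of_subset_preimage_interior_image {Y X : Type*} [TopologicalSpace Y]
    [TopologicalSpace X] [T2Space X] {f : Y → X} (hf : Continuous f)
    (hinj : Function.Injective f) {K S : Set Y} (hK : IsCompact K) (hS : IsOpen S)
    (hSK : S ⊆ f ⁻¹' interior (f '' K)) : IsOpen (f '' S) := by
  have hKS : IsClosed (f '' (K \ S)) := ((hK.diff hS).image hf).isClosed
  suffices f '' S = interior (f '' K) \ f '' (K \ S) by
    rw [this]; exact isOpen_interior.sdiff hKS
  ext x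
  constructor
  · rintro ⟨s, hs, rfl⟩
    exact ⟨hSK hs, fun ⟨k, hk, hks⟩ => hk.2 (hinj hks ▸ hs)⟩
  · rintro ⟨hxK, hxS⟩
    obtain ⟨k, hk, rfl⟩ := interior_subset hxK
    exact ⟨k, by_contra fun hkS => hxS ⟨k, ⟨hk, hkS⟩, rfl⟩, rfl⟩

theorem Set.OrdConnected.exists_Icc_subset_image_val {I : Set ℝ} (hI : I.OrdConnected)
    (hnt : I.Nontrivial) {V : Set I} (hV : IsOpen V) (hne : V.Nonempty) :
    ∃ u v, u < v ∧ Icc u v ⊆ Subtype.val '' V := by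
  obtain ⟨⟨y, hyI⟩, hyV⟩ := hne
  obtain ⟨O, hO, rfl⟩ := isOpen_induced_iff.mp hV
  obtain ⟨z, hzI, hzy⟩ := hnt.exists_ne y
  have hy : y ∈ closure (Ioo (min y z) (max y z)) := by
    rw [closure_Ioo (min_lt_max.mpr hzy.symm).ne]
    exact ⟨min_le_left y z, le_max_left y z⟩
  obtain ⟨w, hwO, hw⟩ := mem_closure_iff.mp hy O hO hyV
  obtain ⟨ε, hε, hball⟩ := Metric.isOpen_iff.mp (hO.inter isOpen_Ioo) w ⟨hwO, hw⟩
  refine ⟨w - ε / 2, w + ε / 2, by linarith, fun x hx => ?_⟩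
  rw [← Real.closedBall_eq_Icc] at hx
  have hx' := hball (Metric.closedBall_subset_ball (half_lt_self hε) hx)
  exact ⟨⟨x, hI.uIcc_subset hyI hzI (Ioo_subset_Icc_self hx'.2)⟩, hx'.1, rfl⟩

theorem IsCompact.preimage_val {α : Type*} [TopologicalSpace α] {s t : Set α}
    (hs : IsCompact s) (hst : s ⊆ t) : IsCompact ((↑) ⁻¹' s : Set t) := by
  rwa [Subtype.isCompact_iff, Subtype.image_preimage_coe, inter_eq_right.mpr hst]

theorem NSac.exists_isPreconnected {X : Type*} [TopologicalSpace X] {n : ℕ} (h : NSac X n)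
    {x : Fin n → X} (hx : Function.Injective x) {i j : Fin n} (hij : i ≤ j) :
    ∃ C, IsPreconnected C ∧ x i ∈ C ∧ x j ∈ C ∧ ∀ k, j < k → x k ∉ C := by
  obtain ⟨α, t, hα, ht, hαt⟩ := h x hx
  refine ⟨α '' Icc (t i) (t j), isPreconnected_Icc.image α hα.continuous.continuousOn,
    hαt i ▸ mem_image_of_mem α (left_mem_Icc.mpr (ht.monotone hij)),
    hαt j ▸ mem_image_of_mem α (right_mem_Icc.mpr (ht.monotone hij)), ?_⟩
  rintro k hjk ⟨s, hs, hsk⟩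
  rw [← hαt k] at hsk
  exact (hs.2.trans_lt (ht hjk)).ne (hα.injective hsk)

theorem not_nsac_four_of_isOpen_image_Ioo {X : Type*} [TopologicalSpace X] [T2Space X]
    {I : Set ℝ} {f : I → X} (hf : Continuous f) (hinj : Function.Injective f)
    {t₁ t₂ t₃ t₄ : ℝ} (h₁₂ : t₁ < t₂) (h₂₃ : t₂ < t₃) (h₃₄ : t₃ < t₄) (ht₁ : t₁ ∈ I)
    (hIcc : Icc t₂ t₄ ⊆ I) (hW : IsOpen (f '' ((↑) ⁻¹' Ioo t₂ t₄))) : ¬ NSac X 4 := by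
  intro h
  set p : Fin 4 → I := ![⟨t₁, ht₁⟩, ⟨t₃, hIcc ⟨h₂₃.le, h₃₄.le⟩⟩,
    ⟨t₂, hIcc ⟨le_rfl, (h₂₃.trans h₃₄).le⟩⟩, ⟨t₄, hIcc ⟨(h₂₃.trans h₃₄).le, le_rfl⟩⟩]
  have hp : Function.Injective p := by
    intro i j hij
    fin_cases i <;> fin_cases j <;> simp [p] at hij ⊢ <;> linarith
  obtain ⟨C, hC, h₁, h₃, hC₂₄⟩ :=
    h.exists_isPreconnected (hinj.comp hp) (i := 0) (j := 1) (by decide)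
  have hK : IsClosed (f '' ((↑) ⁻¹' Icc t₂ t₄)) :=
    ((isCompact_Icc.preimage_val hIcc).image hf).isClosed
  have hCcover : C ⊆ f '' ((↑) ⁻¹' Ioo t₂ t₄) ∪ (f '' ((↑) ⁻¹' Icc t₂ t₄))ᶜ := by
    intro y hy
    refine (em (y ∈ f '' ((↑) ⁻¹' Icc t₂ t₄))).imp
      (fun ⟨s, hs, hsy⟩ => ⟨s, ⟨hs.1.lt_of_ne ?_, hs.2.lt_of_ne ?_⟩, hsy⟩) id
    · rintro hs₂
      have hs : s = p 2 := Subtype.ext hs₂.symm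
      exact hC₂₄ 2 (by decide) (by rwa [← hsy, hs] at hy)
    · rintro hs₄
      have hs : s = p 3 := Subtype.ext hs₄
      exact hC₂₄ 3 (by decide) (by rwa [← hsy, hs] at hy)
  obtain ⟨y, -, hyW, hyK⟩ := hC _ _ hW hK.isOpen_compl hCcover ⟨_, h₃, p 1, ⟨h₂₃, h₃₄⟩, rfl⟩
    ⟨_, h₁, fun ⟨s, hs, hsp⟩ => (hinj hsp ▸ hs).1.not_gt h₁₂⟩
  exact hyK (image_mono (preimage_mono Ioo_subset_Icc_self) hyW)

/-- No compact Hausdorff continuous injective image of an interval (with more than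
one point) is `4`-strongly arc connected. -/
theorem not_four_sac_of_injective_image_of_interval (X : Type*) [TopologicalSpace X]
    [CompactSpace X] [T2Space X]
    (I : Set ℝ) (hI : I.OrdConnected) (hInt : I.Nontrivial)
    (f : I → X) (hf : Continuous f) (hbij : Function.Bijective f) :
    ¬ NSac X 4 := by
  have : LocallyCompactSpace I := hI.isLocallyClosed.locallyCompactSpace
  have : Nonempty X := hInt.nonempty.to_subtype.map f
  obtain ⟨K, hK, hKint⟩ := exists_isCompact_nonempty_interior_image hf hbij.2
  obtain ⟨u, v, huv, huvV⟩ := hI.exists_Icc_subset_image_val hInt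
    (isOpen_interior.preimage hf) (hKint.preimage hbij.2)
  have huvI : Icc u v ⊆ I := fun x hx => by
    obtain ⟨s, -, rfl⟩ := huvV hx
    exact s.2
  have hW : IsOpen (f '' ((↑) ⁻¹' Ioo ((2 * u + v) / 3) v)) := by
    refine isOpen_image_of_subset_preimage_interior_image hf hbij.1 hK
      (isOpen_Ioo.preimage continuous_subtype_val) fun s hs => ?_
    obtain ⟨s', hs', hs's⟩ := huvV ⟨by linarith [hs.1], hs.2.le⟩
    exact Subtype.ext hs's ▸ hs'
  exact not_nsac_four_of_isOpen_image_Ioo hf hbij.1 (t₃ := (u + 2 * v) / 3)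
    (by linarith) (by linarith) (by linarith) (huvI (left_mem_Icc.mpr huv.le))
    ((Icc_subset_Icc (by linarith) le_rfl).trans huvI) hW
end

section
/- Let X be a topological space containing a no exit arc, i.e., an arc A ⊆ X with endpoints a and b such that every arc B ⊆ X which contains both a and b and which meets A ∖ {a, b} must contain all of A. Then X is not 4-strongly arc connected. -/
open Set Topology

/-- `A` is an arc in `X` with endpoints `a` and `b`. -/
def IsArcWithEnds {X : Type*} [TopologicalSpace X] (A : Set X) (a b : X) : Prop :=
  ∃ α : unitInterval → X, Topology.IsEmbedding α ∧ Set.range α = A ∧ α 0 = a ∧ α 1 = b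

/-!
If `α` parametrizes the no exit arc from `a` to `b` and `0 < p < q < 1`, an arc `β` through
`α p, a, α q, b` in this order must contain the whole of `range α`. Then `β⁻¹ ∘ α` is a continuous
injection of `[0, 1]` into itself, hence monotone, so `β` meets `α p` between `a` and `b`,
contradicting the order in which it visits these points (`α q` only serves as a fourth point).
-/

open Function unitInterval

theorem Topology.IsEmbedding.exists_continuous_comp_eq {X Y Z : Type*} [TopologicalSpace X]
    [TopologicalSpace Y] [TopologicalSpace Z] {α : Y → X} {β : Z → X} (hβ : IsEmbedding β)
    (hα : Continuous α) (h : range α ⊆ range β) : ∃ f : Y → Z, Continuous f ∧ β ∘ f = α := by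
  refine ⟨hβ.toHomeomorph.symm ∘ codRestrict α _ (fun y ↦ h (mem_range_self y)),
    by fun_prop, funext fun y ↦ ?_⟩
  exact congrArg Subtype.val (hβ.toHomeomorph.apply_symm_apply ⟨α y, _⟩)

theorem Topology.IsEmbedding.mem_uIcc_of_range_subset {X : Type*} [TopologicalSpace X]
    {α β : I → X} (hβ : IsEmbedding β) (hα : Continuous α) (hα_inj : Injective α)
    (h : range α ⊆ range β) (s : I) {u₀ u₁ v : I} (h₀ : β u₀ = α 0) (h₁ : β u₁ = α 1)
    (hv : β v = α s) : v ∈ uIcc u₀ u₁ := by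
  obtain ⟨f, hf, hβf⟩ := hβ.exists_continuous_comp_eq hα h
  have hf_inj : Injective f := Injective.of_comp (f := β) (hβf ▸ hα_inj)
  have eq_f {u : I} {r : I} (hu : β u = α r) : u = f r :=
    hβ.injective (hu.trans (congrFun hβf r).symm)
  rw [eq_f h₀, eq_f h₁, eq_f hv]
  rcases hf.strictMono_of_inj_boundedOrder' hf_inj with hmono | hanti
  · exact Icc_subset_uIcc ⟨hmono.monotone s.2.1, hmono.monotone s.2.2⟩
  · exact Icc_subset_uIcc' ⟨hanti.antitone s.2.2, hanti.antitone s.2.1⟩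

/-- If a space contains a "no exit arc" `A` with endpoints `a, b` — that is, every
arc in `X` containing both `a` and `b` and meeting `A ∖ {a, b}` must contain all
of `A` — then the space is not `4`-strongly arc connected. -/
theorem not_four_sac_of_no_exit_arc (X : Type*) [TopologicalSpace X]
    (A : Set X) (a b : X) (hA : IsArcWithEnds A a b)
    (hnoexit : ∀ B : Set X, (∃ c d, IsArcWithEnds B c d) →
      a ∈ B → b ∈ B → (B ∩ (A \ {a, b})).Nonempty → A ⊆ B) :
    ¬ NSac X 4 := by
  obtain ⟨α, hα, rfl, rfl, rfl⟩ := hA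
  obtain ⟨p, hp0, hp1⟩ := exists_between (zero_lt_one' I)
  obtain ⟨q, hpq, hq1⟩ := exists_between hp1
  have hinj : Injective ![p, 0, q, 1] := by
    simp only [Matrix.vecCons, Fin.cons_injective_iff]
    simp [hp0.ne', hpq.ne, hq1.ne, (hp0.trans hpq).ne, (hpq.trans hq1).ne,
      injective_of_subsingleton]
  intro hsac
  obtain ⟨β, t, hβ, ht, hβt⟩ := hsac (α ∘ ![p, 0, q, 1]) (hα.injective.comp hinj)
  have hp_interior : α p ∈ range α \ {α 0, α 1} := by
    simp [hα.injective.eq_iff, hp0.ne', hp1.ne]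
  have hsub : range α ⊆ range β :=
    hnoexit (range β) ⟨_, _, β, hβ, rfl, rfl, rfl⟩ ⟨t 1, hβt 1⟩ ⟨t 3, hβt 3⟩
      ⟨α p, ⟨t 0, hβt 0⟩, hp_interior⟩
  have hbetween := hβ.mem_uIcc_of_range_subset hα.continuous hα.injective hsub p
    (hβt 1) (hβt 3) (hβt 0)
  rw [uIcc_of_le (ht (by decide : (1 : Fin 4) < 3)).le] at hbetween
  exact (ht (by decide : (0 : Fin 4) < 1)).not_ge hbetween.1
end

section
/- Let X be a continuum with more than one point. Then X is 3-strongly arc connected if and only if for every three distinct points of X there is a subset of X containing the three points which is either a simple closed curve or a theta curve. -/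
open Set Topology

/-- `S` is a simple closed curve: it is homeomorphic to the unit circle. -/
def IsSimpleClosedCurve {X : Type*} [TopologicalSpace X] (S : Set X) : Prop :=
  Nonempty (↥S ≃ₜ ↥(Metric.sphere (0 : ℂ) 1))

/-- `S` is a theta curve: the union of three arcs with the same pair of distinct
endpoints `a ≠ b`, pairwise meeting exactly in `{a, b}`. -/
def IsThetaCurve {X : Type*} [TopologicalSpace X] (S : Set X) : Prop :=
  ∃ (a b : X) (A₁ A₂ A₃ : Set X), a ≠ b ∧
    IsArcWithEnds A₁ a b ∧ IsArcWithEnds A₂ a b ∧ IsArcWithEnds A₃ a b ∧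
    A₁ ∩ A₂ = {a, b} ∧ A₁ ∩ A₃ = {a, b} ∧ A₂ ∩ A₃ = {a, b} ∧
    S = A₁ ∪ A₂ ∪ A₃

/-!
In a `3`-sac space take, for distinct `x, y, z`, arcs `x → y → z` and `x → z → y`. The piece
`B` of the second between `x` and `z` misses `y`, so cutting the first arc at the last point
before `y` and the first point after `y` where it meets `B` gives a chord through `y`; with the
piece of `B` between the ends of the chord it bounds a simple closed curve through `y`. The same
surgery adds a point `x` to a simple closed curve `S ∋ y`: an arc from a point of `S` through `x`
to `y` yields a chord of `S` through `x`, and the chord together with whichever of the two arcs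
of `S` between its ends contains `y` is a new simple closed curve. If `z` is still outside, a
chord through `z` turns the curve into a theta curve.

Conversely, three points of a simple closed curve lie in order on one of the two arcs between
the outer two. On a theta curve they either lie on the union of two of its arcs, a simple closed
curve, or on three different arcs away from the vertices; then the arc runs from `x` to a vertex,
along the middle arc to the other vertex, and on to `z`.
-/

section Concat

variable {X : Type*}

noncomputable def concatParam (f g : ℝ → X) (u : ℝ) : X := if u ≤ 1 then f u else g (u - 1)

lemma image_concatParam {f g : ℝ → X} (hfg : f 1 = g 0) :
    concatParam f g '' Icc 0 2 = f '' Icc 0 1 ∪ g '' Icc 0 1 := by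
  ext w
  constructor
  · rintro ⟨u, ⟨hu0, hu2⟩, rfl⟩
    by_cases hu : u ≤ 1
    · exact Or.inl ⟨u, ⟨hu0, hu⟩, by simp [concatParam, hu]⟩
    · exact Or.inr ⟨u - 1, ⟨by linarith, by linarith⟩, by simp [concatParam, hu]⟩
  · rintro (⟨u, ⟨hu0, hu1⟩, rfl⟩ | ⟨v, ⟨hv0, hv1⟩, rfl⟩)
    · exact ⟨u, ⟨hu0, by linarith⟩, by simp [concatParam, hu1]⟩
    · rcases hv0.eq_or_lt with rfl | hv
      · exact ⟨1, ⟨zero_le_one, one_le_two⟩, by simp [concatParam, hfg]⟩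
      · exact ⟨v + 1, ⟨by linarith, by linarith⟩, by simp [concatParam, hv]⟩

lemma injOn_concatParam {f g : ℝ → X} {T : Set ℝ} (hT : T ⊆ Ioc 0 1)
    (hf : InjOn f (Icc 0 1)) (hg : InjOn g T) (hfg : ∀ u ∈ Icc (0 : ℝ) 1, ∀ v ∈ T, f u ≠ g v) :
    InjOn (concatParam f g) (Icc 0 1 ∪ (· + 1) '' T) := by
  have left : ∀ u ∈ Icc (0 : ℝ) 1, concatParam f g u = f u := fun u hu => if_pos hu.2
  have right : ∀ v ∈ T, concatParam f g (v + 1) = g v := fun v hv => by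
    simp [concatParam, (hT hv).1]
  rintro _ (hu | ⟨u, hu, rfl⟩) _ (hv | ⟨v, hv, rfl⟩) h
  · rw [left _ hu, left _ hv] at h
    exact hf hu hv h
  · rw [left _ hu, right _ hv] at h
    exact absurd h (hfg _ hu _ hv)
  · rw [right _ hu, left _ hv] at h
    exact absurd h.symm (hfg _ hv _ hu)
  · rw [right _ hu, right _ hv] at h
    rw [hg hu hv h]

lemma inter_eq_pair_of_subset {A C D : Set X} {u v : X} (hAC : A ⊆ C) (hu : u ∈ A) (hv : v ∈ A)
    (hDC : D ∩ C = {u, v}) : A ∩ D = {u, v} :=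
  subset_antisymm (fun _ hw => hDC.le ⟨hw.2, hAC hw.1⟩)
    (pair_subset ⟨hu, (hDC.ge (mem_insert _ _)).1⟩ ⟨hv, (hDC.ge (mem_insert_of_mem _ rfl)).1⟩)

lemma Function.Injective.injOn_IccExtend {α : unitInterval → X} (hα : Function.Injective α) :
    InjOn (IccExtend zero_le_one α) (Icc 0 1) := fun u hu v hv huv => by
  rw [IccExtend_of_mem _ _ hu, IccExtend_of_mem _ _ hv] at huv
  exact congrArg Subtype.val (hα huv)

end Concat

section Arcs

variable {X : Type*} [TopologicalSpace X] {A B : Set X} {a b c : X}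

lemma IsArcWithEnds.symm (h : IsArcWithEnds A a b) : IsArcWithEnds A b a := by
  obtain ⟨α, hα, rfl, rfl, rfl⟩ := h
  refine ⟨α ∘ unitInterval.symm, hα.comp unitInterval.symmHomeomorph.isEmbedding, ?_, by simp,
    by simp⟩
  rw [range_comp, unitInterval.symm_bijective.2.range_eq, image_univ]

lemma IsArcWithEnds.left_mem (h : IsArcWithEnds A a b) : a ∈ A := by
  obtain ⟨α, -, rfl, rfl, -⟩ := h
  exact mem_range_self 0

lemma IsArcWithEnds.right_mem (h : IsArcWithEnds A a b) : b ∈ A :=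
  h.symm.left_mem

lemma IsArcWithEnds.ne (h : IsArcWithEnds A a b) : a ≠ b := by
  obtain ⟨α, hα, -, rfl, rfl⟩ := h
  exact hα.injective.ne (by simp)

lemma IsArcWithEnds.isCompact (h : IsArcWithEnds A a b) : IsCompact A := by
  obtain ⟨α, hα, rfl, -⟩ := h
  exact isCompact_range hα.continuous

lemma IsArcWithEnds.image {Y : Type*} [TopologicalSpace Y] {e : X → Y} (he : IsEmbedding e)
    (h : IsArcWithEnds A a b) : IsArcWithEnds (e '' A) (e a) (e b) := by
  obtain ⟨α, hα, rfl, rfl, rfl⟩ := h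
  exact ⟨e ∘ α, he.comp hα, range_comp e α, rfl, rfl⟩

lemma IsArcWithEnds.exists_param (h : IsArcWithEnds A a b) :
    ∃ f : ℝ → X, Continuous f ∧ InjOn f (Icc 0 1) ∧ f '' Icc 0 1 = A ∧ f 0 = a ∧ f 1 = b := by
  obtain ⟨α, hα, rfl, rfl, rfl⟩ := h
  refine ⟨IccExtend zero_le_one α, hα.continuous.Icc_extend', hα.injective.injOn_IccExtend, ?_,
    IccExtend_left _ _, IccExtend_right _ _⟩
  ext w
  simp only [mem_image, mem_range]
  exact ⟨fun ⟨u, hu, hw⟩ => ⟨⟨u, hu⟩, by rw [← hw, IccExtend_of_mem _ _ hu]⟩,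
    fun ⟨u, hw⟩ => ⟨u, u.2, by rw [IccExtend_val, hw]⟩⟩

lemma continuous_concatParam {f g : ℝ → X} (hf : Continuous f) (hg : Continuous g)
    (hfg : f 1 = g 0) : Continuous (concatParam f g) :=
  Continuous.if_le hf (hg.comp (continuous_sub_right 1)) continuous_id continuous_const
    fun u hu => by simp [hu, hfg]

variable [T2Space X]

lemma isArcWithEnds_image_Icc {f : ℝ → X} {s t : ℝ} (hst : s < t) (hf : ContinuousOn f (Icc s t))
    (hinj : InjOn f (Icc s t)) : IsArcWithEnds (f '' Icc s t) (f s) (f t) := by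
  set φ := (iccHomeoI s t hst).symm
  have hα : Continuous ((Icc s t).domRestrict f ∘ φ) := hf.domRestrict.comp φ.continuous
  refine ⟨_, (hα.isClosedEmbedding (hinj.injective.comp φ.injective)).isEmbedding, ?_, ?_, ?_⟩
  · rw [range_comp, φ.range_coe, image_univ, range_domRestrict]
  · show f (φ 0 : ℝ) = f s
    simp [φ, iccHomeoI_symm_apply_coe]
  · show f (φ 1 : ℝ) = f t
    simp [φ, iccHomeoI_symm_apply_coe]

lemma IsArcWithEnds.union (hA : IsArcWithEnds A a b) (hB : IsArcWithEnds B b c)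
    (hAB : A ∩ B = {b}) : IsArcWithEnds (A ∪ B) a c := by
  obtain ⟨f, hf, hfi, rfl, rfl, rfl⟩ := hA.exists_param
  obtain ⟨g, hg, hgi, rfl, hg0, rfl⟩ := hB.exists_param
  have hcross : ∀ u ∈ Icc (0 : ℝ) 1, ∀ v ∈ Ioc (0 : ℝ) 1, f u ≠ g v := by
    intro u hu v hv h
    have : g v ∈ ({f 1} : Set X) := hAB ▸ ⟨⟨u, hu, h⟩, v, Ioc_subset_Icc_self hv, rfl⟩
    exact hv.1.ne' (hgi (Ioc_subset_Icc_self hv) ⟨le_rfl, zero_le_one⟩ (this.trans hg0.symm))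
  have hdom : Icc (0 : ℝ) 1 ∪ (· + 1) '' Ioc 0 1 = Icc 0 2 := by
    rw [image_add_const_Ioc, zero_add, Icc_union_Ioc_eq_Icc zero_le_one (by norm_num)]
    norm_num
  have := isArcWithEnds_image_Icc two_pos (continuous_concatParam hf hg hg0.symm).continuousOn
    (hdom ▸ injOn_concatParam (fun _ h => h) hfi (hgi.mono Ioc_subset_Icc_self) hcross)
  rwa [image_concatParam hg0.symm, show concatParam f g 0 = f 0 by simp [concatParam],
    show concatParam f g 2 = g 1 by norm_num [concatParam]] at this

lemma IsArcWithEnds.exists_subarc (hA : IsArcWithEnds A a b) {p q : X} (hp : p ∈ A) (hq : q ∈ A)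
    (hpq : p ≠ q) : ∃ D ⊆ A, IsArcWithEnds D p q ∧ D ∩ {a, b} ⊆ {p, q} := by
  obtain ⟨f, hf, hfi, rfl, rfl, rfl⟩ := hA.exists_param
  obtain ⟨s, hs, rfl⟩ := hp
  obtain ⟨t, ht, rfl⟩ := hq
  wlog hst : s < t generalizing s t
  · obtain ⟨D, hDA, hD, hDe⟩ :=
      this t ht s hs hpq.symm ((not_lt.1 hst).lt_of_ne fun h => hpq (h ▸ rfl))
    exact ⟨D, hDA, hD.symm, pair_comm (f s) (f t) ▸ hDe⟩
  have hsub : Icc s t ⊆ Icc 0 1 := Icc_subset_Icc hs.1 ht.2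
  refine ⟨f '' Icc s t, image_mono hsub,
    isArcWithEnds_image_Icc hst hf.continuousOn (hfi.mono hsub), ?_⟩
  rintro _ ⟨⟨r, hr, rfl⟩, h0 | h1⟩
  · have : r = 0 := hfi (hsub hr) ⟨le_rfl, zero_le_one⟩ h0
    exact Or.inl (congrArg f (by linarith [hr.1, hs.1]))
  · have : r = 1 := hfi (hsub hr) ⟨zero_le_one, le_rfl⟩ h1
    exact Or.inr (congrArg f (by linarith [hr.2, ht.2]))

lemma IsArcWithEnds.exists_chord {C : Set X} (hC : IsClosed C) (hA : IsArcWithEnds A a b)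
    (ha : a ∈ C) (hb : b ∈ C) {y : X} (hy : y ∈ A) (hyC : y ∉ C) :
    ∃ u v D, IsArcWithEnds D u v ∧ y ∈ D ∧ D ∩ C = {u, v} := by
  obtain ⟨f, hf, hfi, rfl, rfl, rfl⟩ := hA.exists_param
  obtain ⟨s, hs, rfl⟩ := hy
  have hK : ∀ l r : ℝ, IsCompact (Icc l r ∩ f ⁻¹' C) := fun l r =>
    isCompact_Icc.inter_right (hC.preimage hf)
  obtain ⟨u, ⟨⟨hu0, hus⟩, huC⟩, hu⟩ := (hK 0 s).exists_isGreatest ⟨0, ⟨le_rfl, hs.1⟩, ha⟩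
  obtain ⟨v, ⟨⟨hsv, hv1⟩, hvC⟩, hv⟩ := (hK s 1).exists_isLeast ⟨1, ⟨hs.2, le_rfl⟩, hb⟩
  have hus' : u < s := hus.lt_of_ne fun h => hyC (h ▸ huC)
  have hsv' : s < v := hsv.lt_of_ne fun h => hyC (h ▸ hvC)
  have huv := hus'.trans hsv'
  have hsub : Icc u v ⊆ Icc 0 1 := Icc_subset_Icc hu0 hv1
  refine ⟨f u, f v, f '' Icc u v, isArcWithEnds_image_Icc huv hf.continuousOn (hfi.mono hsub),
    ⟨s, ⟨hus'.le, hsv'.le⟩, rfl⟩, subset_antisymm ?_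
      (pair_subset ⟨⟨u, ⟨le_rfl, huv.le⟩, rfl⟩, huC⟩ ⟨⟨v, ⟨huv.le, le_rfl⟩, rfl⟩, hvC⟩)⟩
  rintro _ ⟨⟨r, hr, rfl⟩, hrC⟩
  rcases le_total r s with hrs | hsr
  · exact Or.inl (congrArg f (le_antisymm (hu ⟨⟨hu0.trans hr.1, hrs⟩, hrC⟩) hr.1))
  · exact Or.inr (congrArg f (le_antisymm hr.2 (hv ⟨⟨hsr, hr.2.trans hv1⟩, hrC⟩)))

end Arcs

section Circle

variable {X : Type*} [TopologicalSpace X] {S : Set X}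

lemma isSimpleClosedCurve_iff_addCircle {p : ℝ} (hp : p ≠ 0) :
    IsSimpleClosedCurve S ↔ Nonempty (S ≃ₜ AddCircle p) := by
  -- `Circle` is the unit sphere of `ℂ` by definition.
  have e : AddCircle p ≃ₜ Metric.sphere (0 : ℂ) 1 :=
    (AddCircle.homeomorphCircle hp).trans (Homeomorph.refl Circle)
  exact ⟨fun ⟨φ⟩ => ⟨φ.trans e.symm⟩, fun ⟨φ⟩ => ⟨φ.trans e⟩⟩

lemma IsSimpleClosedCurve.isCompact (hS : IsSimpleClosedCurve S) : IsCompact S := by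
  obtain ⟨φ⟩ := hS
  exact isCompact_iff_compactSpace.2 φ.symm.compactSpace

lemma IsSimpleClosedCurve.exists_ne (hS : IsSimpleClosedCurve S) (y : X) : ∃ w ∈ S, w ≠ y := by
  obtain ⟨φ⟩ := (isSimpleClosedCurve_iff_addCircle one_ne_zero).1 hS
  have h01 : φ.symm (0 : ℝ) ≠ φ.symm (2⁻¹ : ℝ) := φ.symm.injective.ne fun h => by
    have := (AddCircle.coe_eq_coe_iff_of_mem_Ico (p := (1 : ℝ)) (a := 0)
      (by norm_num) (by norm_num)).1 h
    norm_num at this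
  by_cases h : (φ.symm (0 : ℝ) : X) = y
  · exact ⟨_, (φ.symm (2⁻¹ : ℝ)).2, fun h' => h01 (Subtype.ext (h.trans h'.symm))⟩
  · exact ⟨_, (φ.symm (0 : ℝ)).2, h⟩

lemma AddCircle.exists_arcs_of_ne {p : ℝ} [Fact (0 < p)] {P Q : AddCircle p} (hPQ : P ≠ Q) :
    ∃ A B : Set (AddCircle p), IsArcWithEnds A P Q ∧ IsArcWithEnds B Q P ∧
      A ∪ B = univ ∧ A ∩ B = {P, Q} := by
  have hp : 0 < p := Fact.out
  obtain ⟨θ₁, rfl⟩ := QuotientAddGroup.mk_surjective P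
  set θ₂ : ℝ := (AddCircle.equivIco p θ₁ Q).1
  obtain ⟨hθ₂, hθ₂'⟩ : θ₂ ∈ Ico θ₁ (θ₁ + p) := (AddCircle.equivIco p θ₁ Q).2
  have hQ : (θ₂ : AddCircle p) = Q := AddCircle.coe_equivIco
  have hθ : θ₁ < θ₂ := hθ₂.lt_of_ne fun h => hPQ (by rw [← hQ, h])
  have hinj : ∀ θ, InjOn ((↑) : ℝ → AddCircle p) (Ico θ (θ + p)) := fun θ _ hx _ hy =>
    (AddCircle.coe_eq_coe_iff_of_mem_Ico hx hy).1
  have hcont : Continuous ((↑) : ℝ → AddCircle p) := continuous_quotient_mk'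
  have hA := isArcWithEnds_image_Icc hθ hcont.continuousOn
    ((hinj θ₁).mono (Icc_subset_Ico_right hθ₂'))
  have hB := isArcWithEnds_image_Icc hθ₂' hcont.continuousOn
    ((hinj θ₂).mono (Icc_subset_Ico_right (by linarith)))
  rw [AddCircle.coe_add_period, hQ] at hB
  rw [hQ] at hA
  refine ⟨_, _, hA, hB, ?_, ?_⟩
  · rw [← image_union, Icc_union_Icc_eq_Icc hθ.le hθ₂'.le, eq_univ_iff_forall]
    exact fun z => ⟨_, Ico_subset_Icc_self (AddCircle.equivIco p θ₁ z).2, AddCircle.coe_equivIco⟩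
  · refine subset_antisymm ?_
      (pair_subset ⟨hA.left_mem, hB.right_mem⟩ ⟨hA.right_mem, hB.left_mem⟩)
    rintro _ ⟨⟨c₁, hc₁, rfl⟩, c₂, hc₂, h⟩
    rcases hc₂.2.eq_or_lt with rfl | hc₂'
    · left
      rw [← h, AddCircle.coe_add_period]
    · have hc : c₂ = c₁ := hinj θ₁ ⟨by linarith [hc₂.1], hc₂'⟩ ⟨hc₁.1, by linarith [hc₁.2]⟩ h
      right
      rw [← hQ, le_antisymm hc₁.2 (hc ▸ hc₂.1), mem_singleton_iff]

lemma IsSimpleClosedCurve.exists_arcs (hS : IsSimpleClosedCurve S) {p q : X} (hp : p ∈ S)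
    (hq : q ∈ S) (hpq : p ≠ q) :
    ∃ A B : Set X, IsArcWithEnds A p q ∧ IsArcWithEnds B q p ∧ A ∪ B = S ∧ A ∩ B = {p, q} := by
  obtain ⟨φ⟩ := (isSimpleClosedCurve_iff_addCircle one_ne_zero).1 hS
  set e : AddCircle (1 : ℝ) → X := (↑) ∘ φ.symm
  have he : IsEmbedding e := IsEmbedding.subtypeVal.comp φ.symm.isEmbedding
  have hP : e (φ ⟨p, hp⟩) = p := by simp [e]
  have hQ : e (φ ⟨q, hq⟩) = q := by simp [e]
  have hPQ : φ ⟨p, hp⟩ ≠ φ ⟨q, hq⟩ := fun h => hpq (congrArg Subtype.val (φ.injective h))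
  obtain ⟨A, B, hA, hB, hAB, hAB'⟩ := AddCircle.exists_arcs_of_ne hPQ
  refine ⟨e '' A, e '' B, hP ▸ hQ ▸ hA.image he, hP ▸ hQ ▸ hB.image he, ?_, ?_⟩
  · rw [← image_union, hAB, image_univ, range_comp, φ.symm.range_coe, image_univ,
      Subtype.range_coe]
  · rw [← image_inter he.injective, hAB', image_pair, hP, hQ]

lemma IsSimpleClosedCurve.exists_arc_through (hS : IsSimpleClosedCurve S) {x y z : X}
    (hx : x ∈ S) (hy : y ∈ S) (hz : z ∈ S) (hxz : x ≠ z) : ∃ A, IsArcWithEnds A x z ∧ y ∈ A := by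
  obtain ⟨A, B, hA, hB, rfl, -⟩ := hS.exists_arcs hx hz hxz
  rcases hy with hy | hy
  exacts [⟨A, hA, hy⟩, ⟨B, hB.symm, hy⟩]

variable {D : Set X} {u v : X}

lemma IsSimpleClosedCurve.isThetaCurve_union (hS : IsSimpleClosedCurve S)
    (hD : IsArcWithEnds D u v) (hDS : D ∩ S = {u, v}) : IsThetaCurve (S ∪ D) := by
  obtain ⟨A, B, hA, hB, rfl, hAB⟩ := hS.exists_arcs (hDS.ge (mem_insert _ _)).2
    (hDS.ge (mem_insert_of_mem _ rfl)).2 hD.ne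
  exact ⟨u, v, A, B, D, hD.ne, hA, hB.symm, hD, hAB,
    inter_eq_pair_of_subset subset_union_left hA.left_mem hA.right_mem hDS,
    inter_eq_pair_of_subset subset_union_right hB.right_mem hB.left_mem hDS, rfl⟩

variable [T2Space X] {A B : Set X} {a b : X}

lemma isSimpleClosedCurve_image_Ico {f : ℝ → X} {p : ℝ} (hp : 0 < p)
    (hf : ContinuousOn f (Icc 0 p)) (hper : f 0 = f p) (hinj : InjOn f (Ico 0 p)) :
    IsSimpleClosedCurve (f '' Ico 0 p) := by
  have : Fact (0 < p) := ⟨hp⟩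
  have hF : Continuous (AddCircle.liftIco p 0 f) := AddCircle.liftIco_zero_continuous hper hf
  have hFi : Function.Injective (AddCircle.liftIco p 0 f) :=
    (zero_add p ▸ hinj).injective.comp (AddCircle.equivIco p 0).injective
  have hFr : range (AddCircle.liftIco p 0 f) = f '' Ico 0 p := by
    rw [AddCircle.liftIco, range_comp, (AddCircle.equivIco p 0).range_eq_univ, image_univ,
      range_domRestrict, zero_add]
  exact (isSimpleClosedCurve_iff_addCircle hp.ne').2
    ⟨(Homeomorph.setCongr hFr).symm.trans (hF.isClosedEmbedding hFi).isEmbedding.toHomeomorph.symm⟩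

lemma isSimpleClosedCurve_union (hA : IsArcWithEnds A a b) (hB : IsArcWithEnds B b a)
    (hAB : A ∩ B = {a, b}) : IsSimpleClosedCurve (A ∪ B) := by
  obtain ⟨f, hf, hfi, rfl, rfl, rfl⟩ := hA.exists_param
  obtain ⟨g, hg, hgi, rfl, hg0, hg1⟩ := hB.exists_param
  have hcross : ∀ u ∈ Icc (0 : ℝ) 1, ∀ v ∈ Ioo (0 : ℝ) 1, f u ≠ g v := by
    intro u hu v hv h
    have hv' := Ioo_subset_Icc_self hv
    have : g v ∈ ({f 0, f 1} : Set X) := hAB ▸ ⟨⟨u, hu, h⟩, v, hv', rfl⟩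
    rcases this with h0 | h1
    · exact hv.2.ne (hgi hv' ⟨zero_le_one, le_rfl⟩ (h0.trans hg1.symm))
    · exact hv.1.ne' (hgi hv' ⟨le_rfl, zero_le_one⟩ (h1.trans hg0.symm))
  have hdom : Icc (0 : ℝ) 1 ∪ (· + 1) '' Ioo 0 1 = Ico 0 2 := by
    rw [image_add_const_Ioo, zero_add, Icc_union_Ioo_eq_Ico zero_le_one (by norm_num)]
    norm_num
  have hh : concatParam f g 0 = concatParam f g 2 := by norm_num [concatParam, hg1]
  have hloop := isSimpleClosedCurve_image_Ico two_pos
    (continuous_concatParam hf hg hg0.symm).continuousOn hh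
    (hdom ▸ injOn_concatParam Ioo_subset_Ioc_self hfi (hgi.mono Ioo_subset_Icc_self) hcross)
  rwa [← image_concatParam hg0.symm, ← Ico_insert_right zero_le_two, image_insert_eq,
    insert_eq_of_mem (hh ▸ mem_image_of_mem _ ⟨le_rfl, two_pos⟩)]

lemma IsSimpleClosedCurve.exists_of_chord (hS : IsSimpleClosedCurve S) (hD : IsArcWithEnds D u v)
    (hDS : D ∩ S = {u, v}) {y : X} (hy : y ∈ S) :
    ∃ T, IsSimpleClosedCurve T ∧ D ⊆ T ∧ y ∈ T := by
  obtain ⟨A, B, hA, hB, rfl, -⟩ := hS.exists_arcs (hDS.ge (mem_insert _ _)).2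
    (hDS.ge (mem_insert_of_mem _ rfl)).2 hD.ne
  rcases hy with hy | hy
  · exact ⟨A ∪ D, isSimpleClosedCurve_union hA hD.symm
      (inter_eq_pair_of_subset subset_union_left hA.left_mem hA.right_mem hDS),
      subset_union_right, Or.inl hy⟩
  · refine ⟨D ∪ B, isSimpleClosedCurve_union hD hB ?_, subset_union_left, Or.inr hy⟩
    rw [inter_comm, inter_eq_pair_of_subset subset_union_right hB.right_mem hB.left_mem hDS]

end Circle

section Sac

variable {X : Type*} [TopologicalSpace X] [T2Space X] {S : Set X} {x y z : X}

lemma nsac_three_iff :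
    NSac X 3 ↔ ∀ x y z : X, x ≠ y → x ≠ z → y ≠ z → ∃ A, IsArcWithEnds A x z ∧ y ∈ A := by
  constructor
  · intro h x y z hxy hxz hyz
    obtain ⟨α, t, hα, ht, hαt⟩ := h ![x, y, z] <| by
      intro i j hij
      fin_cases i <;> fin_cases j <;> simp_all [eq_comm]
    have hf : ∀ u : unitInterval, IccExtend zero_le_one α u = α u := IccExtend_val zero_le_one α
    have hsub : Icc (t 0 : ℝ) (t 2) ⊆ Icc 0 1 := Icc_subset_Icc (t 0).2.1 (t 2).2.2
    have hA := isArcWithEnds_image_Icc (ht (by decide : (0 : Fin 3) < 2))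
      hα.continuous.Icc_extend'.continuousOn (hα.injective.injOn_IccExtend.mono hsub)
    rw [hf, hf, hαt 0, hαt 2] at hA
    refine ⟨_, hA, t 1, ⟨(ht (by decide : (0 : Fin 3) < 1)).le,
      (ht (by decide : (1 : Fin 3) < 2)).le⟩, (hf _).trans (hαt 1)⟩
  · intro H xs hxs
    obtain ⟨A, ⟨α, hα, rfl, h0, h1⟩, s, hs⟩ := H (xs 0) (xs 1) (xs 2)
      (hxs.ne (by decide)) (hxs.ne (by decide)) (hxs.ne (by decide))
    have hs0 : s ≠ 0 := fun h => hxs.ne (show (0 : Fin 3) ≠ 1 by decide) (by rw [← h0, ← hs, h])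
    have hs1 : s ≠ 1 := fun h => hxs.ne (show (1 : Fin 3) ≠ 2 by decide) (by rw [← h1, ← hs, h])
    refine ⟨α, ![0, s, 1], hα, Fin.strictMono_iff_lt_succ.2 fun i => ?_, fun i => ?_⟩
    · fin_cases i
      exacts [unitInterval.pos_iff_ne_zero.2 hs0, unitInterval.lt_one_iff_ne_one.2 hs1]
    · fin_cases i
      exacts [h0, hs, h1]

lemma NSac.exists_simpleClosedCurve_mem (h : NSac X 3) (hxy : x ≠ y) (hxz : x ≠ z)
    (hyz : y ≠ z) : ∃ S, IsSimpleClosedCurve S ∧ y ∈ S := by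
  obtain ⟨A, hA, hyA⟩ := nsac_three_iff.1 h x y z hxy hxz hyz
  obtain ⟨A', hA', hzA'⟩ := nsac_three_iff.1 h x z y hxz hxy hyz.symm
  obtain ⟨B, -, hB, hBy⟩ := hA'.exists_subarc hA'.left_mem hzA' hxz
  have hyB : y ∉ B := fun hy => (hBy ⟨hy, mem_insert_of_mem _ rfl⟩).elim hxy.symm hyz
  obtain ⟨u, v, D, hD, hyD, hDB⟩ :=
    hA.exists_chord hB.isCompact.isClosed hB.left_mem hB.right_mem hyA hyB
  obtain ⟨E, hEB, hE, -⟩ := hB.exists_subarc (hDB.ge (mem_insert_of_mem _ rfl)).2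
    (hDB.ge (mem_insert _ _)).2 hD.ne.symm
  refine ⟨D ∪ E, isSimpleClosedCurve_union hD hE ?_, Or.inl hyD⟩
  rw [inter_comm, inter_eq_pair_of_subset hEB hE.right_mem hE.left_mem hDB]

lemma NSac.exists_simpleClosedCurve_mem_pair (h : NSac X 3) (hS : IsSimpleClosedCurve S)
    (hy : y ∈ S) (x : X) : ∃ T, IsSimpleClosedCurve T ∧ x ∈ T ∧ y ∈ T := by
  by_cases hx : x ∈ S
  · exact ⟨S, hS, hx, hy⟩
  obtain ⟨w, hw, hwy⟩ := hS.exists_ne y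
  obtain ⟨A, hA, hxA⟩ := nsac_three_iff.1 h w x y (fun h => hx (h ▸ hw)) hwy
    (fun h => hx (h ▸ hy))
  obtain ⟨u, v, D, hD, hxD, hDS⟩ := hA.exists_chord hS.isCompact.isClosed hw hy hxA hx
  obtain ⟨T, hT, hDT, hyT⟩ := hS.exists_of_chord hD hDS hy
  exact ⟨T, hT, hDT hxD, hyT⟩

lemma NSac.exists_circle_or_theta (h : NSac X 3) (hxy : x ≠ y) (hxz : x ≠ z) (hyz : y ≠ z) :
    ∃ S : Set X, x ∈ S ∧ y ∈ S ∧ z ∈ S ∧ (IsSimpleClosedCurve S ∨ IsThetaCurve S) := by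
  obtain ⟨S₀, hS₀, hyS₀⟩ := h.exists_simpleClosedCurve_mem hxy hxz hyz
  obtain ⟨S, hS, hxS, hyS⟩ := h.exists_simpleClosedCurve_mem_pair hS₀ hyS₀ x
  by_cases hz : z ∈ S
  · exact ⟨S, hxS, hyS, hz, Or.inl hS⟩
  obtain ⟨A, hA, hzA⟩ := nsac_three_iff.1 h x z y hxz hxy hyz.symm
  obtain ⟨u, v, D, hD, hzD, hDS⟩ := hA.exists_chord hS.isCompact.isClosed hxS hyS hzA hz
  exact ⟨S ∪ D, Or.inl hxS, Or.inl hyS, Or.inr hzD, Or.inr (hS.isThetaCurve_union hD hDS)⟩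

end Sac

section Theta

variable {X : Type*} [TopologicalSpace X] [T2Space X] {S : Set X} {a b x y z : X}

lemma exists_arc_through_three_strands {P Q R : Set X} (hP : IsArcWithEnds P a b)
    (hQ : IsArcWithEnds Q a b) (hR : IsArcWithEnds R a b) (hPQ : P ∩ Q = {a, b})
    (hPR : P ∩ R = {a, b}) (hQR : Q ∩ R = {a, b}) (hx : x ∈ P) (hxa : x ≠ a) (hxb : x ≠ b)
    (hy : y ∈ Q) (hz : z ∈ R) (hza : z ≠ a) (hzb : z ≠ b) :
    ∃ A, IsArcWithEnds A x z ∧ y ∈ A := by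
  obtain ⟨P', hP'P, hP', hP'e⟩ := hP.exists_subarc hx hP.left_mem hxa
  obtain ⟨R', hR'R, hR', hR'e⟩ := hR.exists_subarc hR.right_mem hz hzb.symm
  have hbP' : b ∉ P' := fun hb =>
    (hP'e ⟨hb, mem_insert_of_mem _ rfl⟩).elim (fun h => hxb h.symm) (fun h => hP.ne h.symm)
  have haR' : a ∉ R' := fun ha =>
    (hR'e ⟨ha, mem_insert _ _⟩).elim hP.ne (fun h => hza h.symm)
  have h₁ : P' ∩ Q = {a} := by
    refine subset_antisymm (fun w hw => ?_) (singleton_subset_iff.2 ⟨hP'.right_mem, hQ.left_mem⟩)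
    rcases hPQ.le ⟨hP'P hw.1, hw.2⟩ with hwa | hwb
    · exact hwa
    · exact absurd (hwb ▸ hw.1) hbP'
  have h₂ : (P' ∪ Q) ∩ R' = {b} := by
    refine subset_antisymm (fun w hw => ?_)
      (singleton_subset_iff.2 ⟨Or.inr hQ.right_mem, hR'.left_mem⟩)
    obtain ⟨hw | hw, hwR'⟩ := hw
    · rcases hPR.le ⟨hP'P hw, hR'R hwR'⟩ with hwa | hwb
      · exact absurd (hwa ▸ hwR') haR'
      · exact absurd (hwb ▸ hw) hbP'
    · rcases hQR.le ⟨hw, hR'R hwR'⟩ with hwa | hwb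
      · exact absurd (hwa ▸ hwR') haR'
      · exact hwb
  exact ⟨_, (hP'.union hQ h₁).union hR' h₂, Or.inl (Or.inr hy)⟩

lemma IsThetaCurve.exists_arc_through (hS : IsThetaCurve S) (hx : x ∈ S) (hy : y ∈ S)
    (hz : z ∈ S) (hxz : x ≠ z) : ∃ A, IsArcWithEnds A x z ∧ y ∈ A := by
  obtain ⟨a, b, A₁, A₂, A₃, -, h₁, h₂, h₃, h₁₂, h₁₃, h₂₃, rfl⟩ := hS
  set A : Fin 3 → Set X := ![A₁, A₂, A₃]
  have hA : ∀ i, IsArcWithEnds (A i) a b := by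
    intro i
    fin_cases i <;> assumption
  have hAA : ∀ i j, i ≠ j → A i ∩ A j = {a, b} := by
    intro i j hij
    fin_cases i <;> fin_cases j <;>
      first | exact absurd rfl hij | assumption | (rw [inter_comm]; assumption)
  have hmem : ∀ w ∈ A₁ ∪ A₂ ∪ A₃, ∃ i, w ∈ A i := by
    rintro w ((h | h) | h)
    exacts [⟨0, h⟩, ⟨1, h⟩, ⟨2, h⟩]
  have hpair : ∀ m n, m ≠ n → x ∈ A m ∪ A n → y ∈ A m ∪ A n → z ∈ A m ∪ A n →
      ∃ A', IsArcWithEnds A' x z ∧ y ∈ A' := fun m n hmn hx hy hz =>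
    (isSimpleClosedCurve_union (hA m) (hA n).symm (hAA m n hmn)).exists_arc_through hx hy hz hxz
  have hcover : ∀ {w l m n}, w ∈ A l → (l = m ∨ l = n) → w ∈ A m ∪ A n := by
    rintro w l m n hw (rfl | rfl)
    exacts [Or.inl hw, Or.inr hw]
  have hvertex : ∀ {w} i, w = a ∨ w = b → w ∈ A i := by
    rintro w i (rfl | rfl)
    exacts [(hA i).left_mem, (hA i).right_mem]
  obtain ⟨i, hi⟩ := hmem x hx
  obtain ⟨j, hj⟩ := hmem y hy
  obtain ⟨k, hk⟩ := hmem z hz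
  rcases (by decide : ∀ i j k : Fin 3, (∃ m n, m ≠ n ∧ (i = m ∨ i = n) ∧ (j = m ∨ j = n) ∧
      (k = m ∨ k = n)) ∨ (i ≠ j ∧ i ≠ k ∧ j ≠ k)) i j k with
    ⟨m, n, hmn, him, hjm, hkm⟩ | ⟨hij, hik, hjk⟩
  · exact hpair m n hmn (hcover hi him) (hcover hj hjm) (hcover hk hkm)
  by_cases hxab : x = a ∨ x = b
  · exact hpair j k hjk (Or.inl (hvertex j hxab)) (Or.inl hj) (Or.inr hk)
  by_cases hzab : z = a ∨ z = b
  · exact hpair i j hij (Or.inl hi) (Or.inr hj) (Or.inl (hvertex i hzab))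
  rw [not_or] at hxab hzab
  exact exists_arc_through_three_strands (hA i) (hA j) (hA k) (hAA i j hij) (hAA i k hik)
    (hAA j k hjk) hi hxab.1 hxab.2 hj hk hzab.1 hzab.2

end Theta

theorem three_sac_iff_circle_or_theta_general (X : Type*) [TopologicalSpace X]
    [TopologicalSpace.MetrizableSpace X] :
    NSac X 3 ↔
      ∀ x y z : X, x ≠ y → x ≠ z → y ≠ z →
        ∃ S : Set X, x ∈ S ∧ y ∈ S ∧ z ∈ S ∧
          (IsSimpleClosedCurve S ∨ IsThetaCurve S) := by
  refine ⟨fun h x y z hxy hxz hyz => h.exists_circle_or_theta hxy hxz hyz,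
    fun H => nsac_three_iff.2 fun x y z hxy hxz hyz => ?_⟩
  obtain ⟨S, hx, hy, hz, hS | hS⟩ := H x y z hxy hxz hyz
  · exact hS.exists_arc_through hx hy hz hxz
  · exact hS.exists_arc_through hx hy hz hxz

/-- A nondegenerate continuum is `3`-strongly arc connected iff any three distinct
points lie on a simple closed curve or on a theta curve contained in the space. -/
theorem three_sac_iff_circle_or_theta (X : Type*) [TopologicalSpace X] [CompactSpace X]
    [ConnectedSpace X] [TopologicalSpace.MetrizableSpace X] [Nontrivial X] :
    NSac X 3 ↔
      ∀ x y z : X, x ≠ y → x ≠ z → y ≠ z →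
        ∃ S : Set X, x ∈ S ∧ y ∈ S ∧ z ∈ S ∧
          (IsSimpleClosedCurve S ∨ IsThetaCurve S) :=
  three_sac_iff_circle_or_theta_general X
end

section
/- No regular continuum with more than one point is ω-strongly arc connected: if X is a continuum with more than one point having a basis of open sets each of whose boundary is finite, then there exists n such that X is not n-sac. -/
/-!
Pick a basic open set `U` with finite frontier such that both `U` and the complement of its
closure are nonempty, hence infinite (a nondegenerate connected T₁ space has no isolated points).
Take `|∂U| + 2` points alternating between `U` and the complement of `closure U`. An arc visiting
them in order must cross `∂U` strictly between any two consecutive ones, so it passes through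
`|∂U| + 1` distinct points of `∂U`, which is absurd.
-/

open Set Topology

open Function

theorem IsPreconnected.inter_frontier_nonempty_s9 {X : Type*} [TopologicalSpace X] {s t : Set X}
    (hs : IsPreconnected s) (hst : (s ∩ t).Nonempty) (hst' : (s \ t).Nonempty) :
    (s ∩ frontier t).Nonempty := by
  have := Subtype.preconnectedSpace hs
  obtain ⟨z, hz⟩ : (frontier ((↑) ⁻¹' t : Set s)).Nonempty := by
    obtain ⟨x, hxs, hxt⟩ := hst
    obtain ⟨y, hys, hyt⟩ := hst'
    exact nonempty_frontier_iff.2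
      ⟨⟨⟨x, hxs⟩, hxt⟩, fun h => hyt (h.symm ▸ mem_univ (⟨y, hys⟩ : s) :)⟩
  exact ⟨z, z.2, continuous_subtype_val.frontier_preimage_subset t hz⟩

section Order

variable {α X : Type*} [ConditionallyCompleteLinearOrder α] [TopologicalSpace α] [OrderTopology α]
  [DenselyOrdered α] [TopologicalSpace X] {f : α → X} {U : Set X}

theorem Continuous.exists_mem_Ioo_mem_frontier (hf : Continuous f) {a b : α} (hab : a ≤ b)
    (ha : f a ∉ frontier U) (hb : f b ∉ frontier U) (hU : f a ∈ U ↔ f b ∉ U) :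
    ∃ r ∈ Ioo a b, f r ∈ frontier U := by
  have hC : IsPreconnected (f '' Icc a b) := isPreconnected_Icc.image f hf.continuousOn
  have hfa : f a ∈ f '' Icc a b := mem_image_of_mem f (left_mem_Icc.2 hab)
  have hfb : f b ∈ f '' Icc a b := mem_image_of_mem f (right_mem_Icc.2 hab)
  obtain ⟨_, ⟨r, hr, rfl⟩, hrU⟩ : (f '' Icc a b ∩ frontier U).Nonempty := by
    by_cases haU : f a ∈ U
    · exact hC.inter_frontier_nonempty_s9 ⟨_, hfa, haU⟩ ⟨_, hfb, hU.1 haU⟩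
    · exact hC.inter_frontier_nonempty_s9 ⟨_, hfb, not_not.1 (mt hU.2 haU)⟩ ⟨_, hfa, haU⟩
  refine ⟨r, ⟨lt_of_le_of_ne hr.1 ?_, lt_of_le_of_ne hr.2 ?_⟩, hrU⟩
  · rintro rfl; exact ha hrU
  · rintro rfl; exact hb hrU

theorem Continuous.exists_strictMono_mem_frontier (hf : Continuous f) {m : ℕ}
    {t : Fin (m + 1) → α} (ht : StrictMono t) (hfr : ∀ i, f (t i) ∉ frontier U)
    (halt : ∀ i : Fin m, f (t i.castSucc) ∈ U ↔ f (t i.succ) ∉ U) :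
    ∃ r : Fin m → α, StrictMono r ∧ ∀ i, f (r i) ∈ frontier U := by
  choose r hr hrU using fun i : Fin m =>
    hf.exists_mem_Ioo_mem_frontier (ht Fin.castSucc_lt_succ).le (hfr _) (hfr _) (halt i)
  refine ⟨r, fun i j hij => ?_, hrU⟩
  calc r i < t i.succ := (hr i).2
    _ ≤ t j.castSucc := ht.monotone (Fin.succ_le_castSucc_iff.2 hij)
    _ < r j := (hr j).1

end Order

theorem Set.Infinite.exists_injective_alternating {X : Type*} {A B : Set X} (hA : A.Infinite)
    (hB : B.Infinite) (hAB : Disjoint A B) :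
    ∃ p : ℕ → X, Injective p ∧ (∀ i, Even i → p i ∈ A) ∧ ∀ i, Odd i → p i ∈ B := by
  classical
  let a := hA.natEmbedding
  let b := hB.natEmbedding
  refine ⟨fun i => if Even i then a i else b i, fun i j hij => ?_,
    fun i hi => by simp only [if_pos hi, Subtype.coe_prop],
    fun i hi => by simp only [if_neg (Nat.not_even_iff_odd.2 hi), Subtype.coe_prop]⟩
  simp only at hij
  split_ifs at hij
  · exact a.injective (Subtype.val_injective hij)
  · exact (hAB.ne_of_mem (a i).2 (b j).2 hij).elim
  · exact (hAB.ne_of_mem (a j).2 (b i).2 hij.symm).elim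
  · exact b.injective (Subtype.val_injective hij)

theorem not_nSac_of_isOpen_of_infinite {X : Type*} [TopologicalSpace X] {U : Set X}
    (hU : IsOpen U) [Finite (frontier U)] (hUi : U.Infinite) (hVi : (closure U)ᶜ.Infinite) :
    ¬ NSac X (Nat.card (frontier U) + 2) := by
  intro hsac
  obtain ⟨p, hp, hpU, hpV⟩ :=
    hUi.exists_injective_alternating hVi (disjoint_compl_right_iff_subset.2 subset_closure)
  have hmem : ∀ i, p i ∈ U ↔ Even i := fun i =>
    ⟨fun h => by_contra fun he => hpV i (Nat.not_even_iff_odd.1 he) (subset_closure h), hpU i⟩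
  have hfr : ∀ i, p i ∉ frontier U := fun i h => by
    rcases Nat.even_or_odd i with he | ho
    · exact (hU.frontier_eq ▸ h).2 (hpU i he)
    · exact hpV i ho (frontier_subset_closure h)
  obtain ⟨γ, t, hγ, ht, hγt⟩ := hsac (p ∘ Fin.val) (hp.comp Fin.val_injective)
  obtain ⟨r, hr, hrU⟩ := hγ.continuous.exists_strictMono_mem_frontier (U := U) ht
    (fun i => by rw [hγt]; exact hfr i) fun i => by
      rw [hγt, hγt, comp_apply, comp_apply, hmem, hmem, Fin.val_succ, Fin.val_castSucc,
        Nat.even_add_one, not_not]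
  have hcard := Nat.card_le_card_of_injective (fun i => (⟨γ (r i), hrU i⟩ : frontier U))
    fun i j h => hr.injective (hγ.injective (congrArg Subtype.val h))
  simp at hcard

theorem not_omega_sac_of_regular_general (X : Type*) [TopologicalSpace X]
    [ConnectedSpace X] [TopologicalSpace.MetrizableSpace X] [Nontrivial X]
    (hreg : ∃ B : Set (Set X), TopologicalSpace.IsTopologicalBasis B ∧
      ∀ U ∈ B, (frontier U).Finite) :
    ∃ n : ℕ, 1 ≤ n ∧ ¬ NSac X n := by
  obtain ⟨B, hB, hBfin⟩ := hreg
  obtain ⟨x, y, hxy⟩ := exists_pair_ne X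
  obtain ⟨U, hUB, hxU, hUy⟩ := hB.exists_closure_subset (isOpen_compl_singleton.mem_nhds hxy)
  have hU : IsOpen U := hB.isOpen hUB
  have hyU : y ∉ closure U := fun h => hUy h rfl
  have : Finite (frontier U) := (hBfin U hUB).to_subtype
  exact ⟨_, Nat.le_add_left 1 _, not_nSac_of_isOpen_of_infinite hU
    (infinite_of_mem_nhds x (hU.mem_nhds hxU))
    (infinite_of_mem_nhds y (isClosed_closure.isOpen_compl.mem_nhds hyU))⟩

/-- No regular continuum with more than one point is `ω`-strongly arc connected:
if a nondegenerate continuum has a basis of open sets with finite boundaries, then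
for some `n ≥ 1` it fails to be `n`-strongly arc connected. -/
theorem not_omega_sac_of_regular (X : Type*) [TopologicalSpace X] [CompactSpace X]
    [ConnectedSpace X] [TopologicalSpace.MetrizableSpace X] [Nontrivial X]
    (hreg : ∃ B : Set (Set X), TopologicalSpace.IsTopologicalBasis B ∧
      ∀ U ∈ B, (frontier U).Finite) :
    ∃ n : ℕ, 1 ≤ n ∧ ¬ NSac X n :=
  not_omega_sac_of_regular_general X hreg
end

section
/- (ω-Gluing Lemma) Let Z be a Hausdorff topological space and let X and Y be subsets of Z with Z = X ∪ Y such that A = X ∩ Y is infinite. If X (with the subspace topology) is ω-sac⁺ with respect to A and Y (with the subspace topology) is ω-strongly arc connected, then Z is ω-strongly arc connected. -/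
/-!
Choose fresh points `f k` of `A = X ∩ Y` away from the `z i`, and bracket each `z i` by
`f (3 i)` and `f (3 i + 2)`. An arc `α` in `X` visits the brackets in order, passing through
`z i` between them whenever `z i ∈ X`. Since `α` meets `A` in a finite set, an arc `β` in `Y` can
visit the brackets with `z i` between them when `z i ∉ X`, and afterwards every point where `α`
meets `Y`. Each window of `β` between two brackets then meets `α` only at its ends, so splicing
these windows of `β` into `α`, in place of the windows of `α` between the same brackets, gives an
injective path through the `z i` in order; it is an embedding since `[0,1]` is compact and `Z` is
Hausdorff.
-/

open Set Topology

/-- `W` is `ω`-sac⁺ with respect to `A ⊆ W`: for every `n ≥ 1` and `n` distinct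
points there is an arc visiting them in order whose image meets `A` in a finite set. -/
def OmegaSacPlus (W : Type*) [TopologicalSpace W] (A : Set W) : Prop :=
  ∀ n : ℕ, 1 ≤ n → ∀ x : Fin n → W, Function.Injective x →
    ∃ (α : unitInterval → W) (t : Fin n → unitInterval),
      Topology.IsEmbedding α ∧ StrictMono t ∧ (∀ i, α (t i) = x i) ∧
      (Set.range α ∩ A).Finite

open unitInterval

theorem sub_div_sub_mem_Icc {a b x : ℝ} (hab : a < b) (hx : x ∈ Icc a b) :
    (x - a) / (b - a) ∈ Icc (0 : ℝ) 1 :=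
  ⟨div_nonneg (sub_nonneg.2 hx.1) (sub_pos.2 hab).le,
    (div_le_one (sub_pos.2 hab)).2 (sub_le_sub_right hx.2 _)⟩

namespace unitInterval

noncomputable def segmentMap (u v p q : I) (t : I) : I :=
  projIcc 0 1 zero_le_one ((p : ℝ) + (t - u) / (v - u) * (q - p))

variable {u v p q t : I}

theorem continuous_segmentMap : Continuous (segmentMap u v p q) := by
  unfold segmentMap; fun_prop

theorem coe_segmentMap (huv : u < v) (hpq : p ≤ q) (ht : t ∈ Icc u v) :
    (segmentMap u v p q t : ℝ) = p + (t - u) / (v - u) * (q - p) := by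
  obtain ⟨h0, h1⟩ := sub_div_sub_mem_Icc (Subtype.coe_lt_coe.2 huv) ht
  have hpq' : (p : ℝ) ≤ q := hpq
  rw [segmentMap, projIcc_of_mem]
  exact ⟨by nlinarith [p.2.1], by nlinarith [q.2.2]⟩

theorem segmentMap_left : segmentMap u v p q u = p := by
  simp [segmentMap, projIcc_of_mem _ p.2]

theorem segmentMap_right (huv : u < v) : segmentMap u v p q v = q := by
  have : (v : ℝ) - u ≠ 0 := (sub_pos.2 (Subtype.coe_lt_coe.2 huv)).ne'
  simp [segmentMap, div_self this, projIcc_of_mem _ q.2]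

theorem segmentMap_injOn (huv : u < v) (hpq : p < q) :
    InjOn (segmentMap u v p q) (Icc u v) := by
  intro t ht s hs h
  have h' := congrArg Subtype.val h
  rw [coe_segmentMap huv hpq.le ht, coe_segmentMap huv hpq.le hs] at h'
  have huv' : (v : ℝ) - u ≠ 0 := (sub_pos.2 (Subtype.coe_lt_coe.2 huv)).ne'
  have hpq' : (q : ℝ) - p ≠ 0 := (sub_pos.2 (Subtype.coe_lt_coe.2 hpq)).ne'
  field_simp at h'
  have := mul_right_cancel₀ hpq' (by linarith : ((t : ℝ) - u) * (q - p) = (s - u) * (q - p))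
  exact Subtype.ext (by linarith)

theorem segmentMap_mapsTo (huv : u < v) (hpq : p ≤ q) :
    MapsTo (segmentMap u v p q) (Icc u v) (Icc p q) := by
  intro t ht
  obtain ⟨h0, h1⟩ := sub_div_sub_mem_Icc (Subtype.coe_lt_coe.2 huv) ht
  have hpq' : (p : ℝ) ≤ q := hpq
  constructor <;> rw [← Subtype.coe_le_coe, coe_segmentMap huv hpq ht] <;> nlinarith

theorem segmentMap_surjOn (huv : u < v) (hpq : p < q) :
    SurjOn (segmentMap u v p q) (Ioo u v) (Ioo p q) := by
  intro s hs
  have huv' : (u : ℝ) < v := huv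
  have hpq' : (0 : ℝ) < q - p := sub_pos.2 (Subtype.coe_lt_coe.2 hpq)
  have hs' : (p : ℝ) < s ∧ (s : ℝ) < q := hs
  set r := ((s : ℝ) - p) / (q - p)
  have hr : 0 < r ∧ r < 1 := ⟨div_pos (by linarith) hpq', (div_lt_one hpq').2 (by linarith)⟩
  have ht : (u : ℝ) + r * (v - u) ∈ I := ⟨by nlinarith [u.2.1], by nlinarith [v.2.2]⟩
  have htuv : (⟨_, ht⟩ : I) ∈ Ioo u v :=
    ⟨show (u : ℝ) < _ by nlinarith, show _ < (v : ℝ) by nlinarith⟩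
  refine ⟨_, htuv, Subtype.ext ?_⟩
  have hvu : (v : ℝ) - u ≠ 0 := (sub_pos.2 huv').ne'
  rw [coe_segmentMap huv hpq.le (Ioo_subset_Icc_self htuv)]
  simp only [r]
  field_simp
  ring

end unitInterval

section

variable {Z : Type*}

noncomputable def replaceSegment (γ β : I → Z) (u v p q : I) (t : I) : Z :=
  if t ∈ Icc u v then β (segmentMap u v p q t) else γ t

namespace replaceSegment

variable {γ β : I → Z} {u v p q : I}

theorem of_mem {t : I} (ht : t ∈ Icc u v) :
    replaceSegment γ β u v p q t = β (segmentMap u v p q t) := if_pos ht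

theorem of_notMem {t : I} (ht : t ∉ Icc u v) :
    replaceSegment γ β u v p q t = γ t := if_neg ht

theorem of_notMem_Ioo (hu : γ u = β p) (hv : γ v = β q) (huv : u < v) {t : I}
    (ht : t ∉ Ioo u v) : replaceSegment γ β u v p q t = γ t := by
  by_cases htuv : t ∈ Icc u v
  · rw [of_mem htuv]
    obtain rfl | rfl : t = u ∨ t = v := by
      simp only [mem_Icc, mem_Ioo, not_and_or, not_lt] at htuv ht
      rcases ht with h | h
      · exact .inl (le_antisymm h htuv.1)
      · exact .inr (le_antisymm htuv.2 h)
    · rw [segmentMap_left, hu]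
    · rw [segmentMap_right huv, hv]
  · exact of_notMem htuv

theorem continuous [TopologicalSpace Z] (hγ : Continuous γ) (hβ : Continuous β)
    (hu : γ u = β p) (hv : γ v = β q) (huv : u < v) :
    Continuous (replaceSegment γ β u v p q) := by
  refine Continuous.if (fun t ht => ?_) (hβ.comp continuous_segmentMap) hγ
  have hIoo : t ∉ Ioo u v := fun h => ht.2 (interior_maximal Ioo_subset_Icc_self isOpen_Ioo h)
  exact (of_mem (isClosed_Icc.frontier_subset ht)).symm.trans (of_notMem_Ioo hu hv huv hIoo)

theorem injective (hγ : Function.Injective γ) (hβ : Function.Injective β)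
    (huv : u < v) (hpq : p < q)
    (hsep : γ '' (Ioo u v)ᶜ ∩ β '' Icc p q ⊆ {γ u, γ v}) :
    Function.Injective (replaceSegment γ β u v p q) := by
  have cross : ∀ t s, t ∈ Icc u v → s ∉ Icc u v → β (segmentMap u v p q t) ≠ γ s := by
    intro t s ht hs h
    have hmem : γ s ∈ ({γ u, γ v} : Set Z) :=
      hsep ⟨⟨s, fun h' => hs (Ioo_subset_Icc_self h'), rfl⟩,
        ⟨_, segmentMap_mapsTo huv hpq.le ht, h⟩⟩
    rcases hmem with h' | h' <;> apply hs <;> rw [hγ h']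
    exacts [left_mem_Icc.2 huv.le, right_mem_Icc.2 huv.le]
  intro t s h
  by_cases ht : t ∈ Icc u v <;> by_cases hs : s ∈ Icc u v
  · rw [of_mem ht, of_mem hs] at h
    exact segmentMap_injOn huv hpq ht hs (hβ h)
  · rw [of_mem ht, of_notMem hs] at h
    exact (cross t s ht hs h).elim
  · rw [of_notMem ht, of_mem hs] at h
    exact (cross s t hs ht h.symm).elim
  · rw [of_notMem ht, of_notMem hs] at h
    exact hγ h

theorem range_subset (huv : u < v) (hpq : p ≤ q) :
    range (replaceSegment γ β u v p q) ⊆ range γ ∪ β '' Icc p q := by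
  rintro _ ⟨t, rfl⟩
  by_cases ht : t ∈ Icc u v
  · exact .inr ⟨_, segmentMap_mapsTo huv hpq ht, (of_mem ht).symm⟩
  · exact .inl ⟨t, (of_notMem ht).symm⟩

theorem image_Ioo_subset (huv : u < v) (hpq : p < q) :
    β '' Ioo p q ⊆ replaceSegment γ β u v p q '' Ioo u v := by
  rintro _ ⟨s, hs, rfl⟩
  obtain ⟨t, ht, rfl⟩ := segmentMap_surjOn huv hpq hs
  exact ⟨t, ht, of_mem (Ioo_subset_Icc_self ht)⟩

end replaceSegment

theorem inter_image_Icc_subset_of_range_subset {ι : Type*} {α β γ : I → Z}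
    (hβi : Function.Injective β) {s : Finset ι} {k : ι} {p q : ι → I}
    (hγ : range γ ⊆ range α ∪ ⋃ i ∈ s, β '' Icc (p i) (q i))
    (hd : ∀ i ∈ s, Disjoint (Icc (p k) (q k)) (Icc (p i) (q i)))
    (hsep : range α ∩ β '' Icc (p k) (q k) ⊆ {β (p k), β (q k)}) :
    range γ ∩ β '' Icc (p k) (q k) ⊆ {β (p k), β (q k)} := by
  rintro x ⟨hxγ, hxβ⟩
  rcases hγ hxγ with hxα | hxi
  · exact hsep ⟨hxα, hxβ⟩
  · simp only [mem_iUnion] at hxi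
    obtain ⟨i, hi, hxi⟩ := hxi
    exact (disjoint_left.1 ((disjoint_image_iff hβi).2 (hd i hi)) hxβ hxi).elim

theorem exists_replaceSegments [TopologicalSpace Z] {ι : Type*} {α β : I → Z}
    (hα : Continuous α) (hαi : Function.Injective α)
    (hβ : Continuous β) (hβi : Function.Injective β) (s : Finset ι) {u v p q : ι → I}
    (huv : ∀ i ∈ s, u i < v i) (hpq : ∀ i ∈ s, p i < q i)
    (hu : ∀ i ∈ s, α (u i) = β (p i)) (hv : ∀ i ∈ s, α (v i) = β (q i))
    (hαd : (s : Set ι).PairwiseDisjoint fun i => Icc (u i) (v i))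
    (hβd : (s : Set ι).PairwiseDisjoint fun i => Icc (p i) (q i))
    (hsep : ∀ i ∈ s, range α ∩ β '' Icc (p i) (q i) ⊆ {β (p i), β (q i)}) :
    ∃ γ : I → Z, Continuous γ ∧ Function.Injective γ ∧
      range γ ⊆ range α ∪ ⋃ i ∈ s, β '' Icc (p i) (q i) ∧
      (∀ t, (∀ i ∈ s, t ∉ Ioo (u i) (v i)) → γ t = α t) ∧
      ∀ i ∈ s, β '' Ioo (p i) (q i) ⊆ γ '' Ioo (u i) (v i) := by
  classical
  induction s using Finset.induction_on with
  | empty => exact ⟨α, hα, hαi, subset_union_left, fun _ _ => rfl, by simp⟩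
  | insert k s hk ih =>
    simp only [Finset.forall_mem_insert] at huv hpq hu hv hsep
    rw [Finset.coe_insert, pairwiseDisjoint_insert] at hαd hβd
    obtain ⟨γ, hγ, hγi, hγr, hγα, hγβ⟩ :=
      ih huv.2 hpq.2 hu.2 hv.2 hαd.1 hβd.1 hsep.2
    have hne : ∀ i ∈ s, k ≠ i := fun i hi h => hk (h ▸ hi)
    have hout : ∀ t ∈ Icc (u k) (v k), ∀ i ∈ s, t ∉ Ioo (u i) (v i) := fun t ht i hi hti =>
      disjoint_left.1 (hαd.2 i hi (hne i hi)) ht (Ioo_subset_Icc_self hti)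
    have hγu : γ (u k) = β (p k) := (hγα _ (hout _ (left_mem_Icc.2 huv.1.le))).trans hu.1
    have hγv : γ (v k) = β (q k) := (hγα _ (hout _ (right_mem_Icc.2 huv.1.le))).trans hv.1
    have hsepk : γ '' (Ioo (u k) (v k))ᶜ ∩ β '' Icc (p k) (q k) ⊆ {γ (u k), γ (v k)} := by
      rw [hγu, hγv]
      exact (inter_subset_inter_left _ (image_subset_range _ _)).trans
        (inter_image_Icc_subset_of_range_subset hβi hγr (fun i hi => hβd.2 i hi (hne i hi)) hsep.1)
    refine ⟨replaceSegment γ β (u k) (v k) (p k) (q k),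
      replaceSegment.continuous hγ hβ hγu hγv huv.1,
      replaceSegment.injective hγi hβi huv.1 hpq.1 hsepk, ?_, ?_, ?_⟩
    · rw [Finset.set_biUnion_insert]
      refine (replaceSegment.range_subset huv.1 hpq.1.le).trans (union_subset ?_ ?_)
      · exact hγr.trans (union_subset_union_right _ subset_union_right)
      · exact subset_union_left.trans subset_union_right
    · intro t ht
      rw [Finset.forall_mem_insert] at ht
      rw [replaceSegment.of_notMem_Ioo hγu hγv huv.1 ht.1, hγα t ht.2]
    · rw [Finset.forall_mem_insert]
      refine ⟨replaceSegment.image_Ioo_subset huv.1 hpq.1, fun i hi => ?_⟩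
      refine (hγβ i hi).trans (image_congr fun t ht => ?_).symm.subset
      refine replaceSegment.of_notMem_Ioo hγu hγv huv.1 fun htk => ?_
      exact disjoint_left.1 (hαd.2 i hi (hne i hi)) (Ioo_subset_Icc_self htk)
        (Ioo_subset_Icc_self ht)

open scoped Classical in
noncomputable def bracketed (z f : ℕ → Z) (S : Set Z) (k : ℕ) : Z :=
  if k % 3 = 1 ∧ z (k / 3) ∈ S then z (k / 3) else f k

section bracketed

variable {z f : ℕ → Z} {S : Set Z}

theorem bracketed_three_mul (i : ℕ) : bracketed z f S (3 * i) = f (3 * i) :=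
  if_neg fun h => by omega

theorem bracketed_three_mul_add_two (i : ℕ) : bracketed z f S (3 * i + 2) = f (3 * i + 2) :=
  if_neg fun h => by omega

theorem bracketed_three_mul_add_one {i : ℕ} (hi : z i ∈ S) : bracketed z f S (3 * i + 1) = z i := by
  have h : (3 * i + 1) / 3 = i := by omega
  rw [bracketed, h, if_pos ⟨by omega, hi⟩]

theorem bracketed_mem {T : Set Z} (hS : S ⊆ T) (hf : ∀ k, f k ∈ T) (k : ℕ) :
    bracketed z f S k ∈ T := by
  unfold bracketed
  split_ifs with h
  exacts [hS h.2, hf k]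

theorem injOn_bracketed {n : ℕ} (hz : InjOn z (Iio n)) (hf : Function.Injective f)
    (hfz : ∀ k, ∀ i < n, f k ≠ z i) : InjOn (bracketed z f S) (Iio (3 * n)) := by
  intro k hk l hl h
  have hk' : k / 3 < n := by simp only [mem_Iio] at hk; omega
  have hl' : l / 3 < n := by simp only [mem_Iio] at hl; omega
  unfold bracketed at h
  split_ifs at h with hk1 hl1 hl1
  · have := hz hk' hl' h
    omega
  · exact absurd h.symm (hfz _ _ hk')
  · exact absurd h (hfz _ _ hl')
  · exact hf h

end bracketed

theorem exists_nat_visits_of_fin {W : Type*} {N : ℕ} {P : (I → W) → Prop}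
    (h : ∀ x : Fin N → W, Function.Injective x →
      ∃ (α : I → W) (t : Fin N → I), P α ∧ StrictMono t ∧ ∀ i, α (t i) = x i)
    (x : ℕ → W) (hx : InjOn x (Iio N)) :
    ∃ (α : I → W) (τ : ℕ → I), P α ∧ StrictMonoOn τ (Iio N) ∧ ∀ k < N, α (τ k) = x k := by
  obtain ⟨α, t, hP, ht, hαt⟩ := h (fun i => x i) fun i j hij => Fin.ext (hx i.2 j.2 hij)
  refine ⟨α, fun k => if hk : k < N then t ⟨k, hk⟩ else 0, hP, fun k hk l hl hkl => ?_,
    fun k hk => ?_⟩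
  · simp only [dif_pos (show k < N from hk), dif_pos (show l < N from hl)]
    exact ht hkl
  · simp only [dif_pos hk]
    exact hαt _

theorem exists_extend_injOn_of_finite {W : Type*} {N : ℕ} {x : ℕ → W} (hx : InjOn x (Iio N))
    {D : Set W} (hD : D.Finite) :
    ∃ (M : ℕ) (y : ℕ → W), N ≤ M ∧ InjOn y (Iio M) ∧ (∀ k < N, y k = x k) ∧ D ⊆ y '' Iio M := by
  induction D, hD using Set.Finite.induction_on with
  | empty => exact ⟨N, x, le_rfl, hx, fun _ _ => rfl, empty_subset _⟩
  | @insert d D _ _ ih =>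
    obtain ⟨M, y, hNM, hy, hyx, hDy⟩ := ih
    by_cases hd : d ∈ y '' Iio M
    · exact ⟨M, y, hNM, hy, hyx, insert_subset hd hDy⟩
    have hupd : ∀ k < M, Function.update y M d k = y k := fun k hk =>
      Function.update_of_ne hk.ne _ _
    refine ⟨M + 1, Function.update y M d, hNM.trans M.le_succ, ?_,
      fun k hk => (hupd k (by omega)).trans (hyx k hk), ?_⟩
    · intro k hk l hl h
      simp only [mem_Iio, Nat.lt_succ_iff] at hk hl
      rcases hk.lt_or_eq with hk | rfl <;> rcases hl.lt_or_eq with hl | rfl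
      · rw [hupd k hk, hupd l hl] at h
        exact hy hk hl h
      · rw [hupd k hk, Function.update_self] at h
        exact (hd ⟨k, hk, h⟩).elim
      · rw [hupd l hl, Function.update_self] at h
        exact (hd ⟨l, hl, h.symm⟩).elim
      · rfl
    · refine insert_subset ⟨M, M.lt_succ_self, Function.update_self ..⟩ fun q hq => ?_
      obtain ⟨k, hk, rfl⟩ := hDy hq
      exact ⟨k, lt_trans hk M.lt_succ_self, hupd k hk⟩

theorem OmegaSacPlus.exists_arc {W : Type*} [TopologicalSpace W] {A : Set W}
    (hW : OmegaSacPlus W A) {N : ℕ} (hN : 1 ≤ N) {x : ℕ → W} (hx : InjOn x (Iio N)) :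
    ∃ (α : I → W) (τ : ℕ → I), IsEmbedding α ∧ (range α ∩ A).Finite ∧
      StrictMonoOn τ (Iio N) ∧ ∀ k < N, α (τ k) = x k := by
  obtain ⟨α, τ, ⟨hα, hαA⟩, hτ, hατ⟩ :=
    exists_nat_visits_of_fin (P := fun α => IsEmbedding α ∧ (range α ∩ A).Finite)
      (fun x hx => let ⟨α, t, hα, ht, hαt, hαA⟩ := hW N hN x hx; ⟨α, t, ⟨hα, hαA⟩, ht, hαt⟩) x hx
  exact ⟨α, τ, hα, hαA, hτ, hατ⟩

theorem exists_arc_through_then_finite {W : Type*} [TopologicalSpace W]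
    (hW : ∀ n : ℕ, 1 ≤ n → NSac W n) {N : ℕ} (hN : 1 ≤ N) {x : ℕ → W} (hx : InjOn x (Iio N))
    {D : Set W} (hD : D.Finite) :
    ∃ (M : ℕ) (β : I → W) (θ : ℕ → I), N ≤ M ∧ IsEmbedding β ∧ StrictMonoOn θ (Iio M) ∧
      (∀ k < N, β (θ k) = x k) ∧ D ⊆ (β ∘ θ) '' Iio M := by
  obtain ⟨M, y, hNM, hy, hyx, hDy⟩ := exists_extend_injOn_of_finite hx hD
  obtain ⟨β, θ, hβ, hθ, hβθ⟩ := exists_nat_visits_of_fin (hW M (by omega)) y hy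
  refine ⟨M, β, θ, hNM, hβ, hθ, fun k hk => (hβθ k (by omega)).trans (hyx k hk), ?_⟩
  exact hDy.trans (image_congr fun k hk => (hβθ k hk).symm).subset

theorem StrictMonoOn.pairwiseDisjoint_Icc_three_mul {α : Type*} [Preorder α] {n : ℕ}
    {τ : ℕ → α} (hτ : StrictMonoOn τ (Iio (3 * n))) :
    (Iio n).PairwiseDisjoint fun i => Icc (τ (3 * i)) (τ (3 * i + 2)) := by
  have key : ∀ i j, i < j → j < n → Disjoint (Icc (τ (3 * i)) (τ (3 * i + 2)))
      (Icc (τ (3 * j)) (τ (3 * j + 2))) := by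
    intro i j hij hj
    have : τ (3 * i + 2) < τ (3 * j) := hτ (by simp only [mem_Iio]; omega)
      (by simp only [mem_Iio]; omega) (by omega)
    exact disjoint_left.2 fun t ht ht' => (ht.2.trans_lt this).not_ge ht'.1
  intro i hi j hj hij
  rcases hij.lt_or_gt with h | h
  exacts [key i j h hj, (key j i h hi).symm]

theorem inter_image_Icc_subset_of_visits {W : Type*} {β : I → W} (hβ : Function.Injective β)
    {N : ℕ} {θ : ℕ → I} (hθ : StrictMonoOn θ (Iio N)) {R : Set W}
    (hR : R ∩ range β ⊆ (β ∘ θ) '' Iio N) {a b : ℕ} (hab : a ≤ b) (hb : b < N)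
    (hmid : ∀ k, a < k → k < b → β (θ k) ∉ R) :
    R ∩ β '' Icc (θ a) (θ b) ⊆ {β (θ a), β (θ b)} := by
  rintro _ ⟨hqR, s, hs, rfl⟩
  obtain ⟨k, hk, hks⟩ := hR ⟨hqR, s, rfl⟩
  obtain rfl : θ k = s := hβ hks
  have ha : a ∈ Iio N := lt_of_le_of_lt hab hb
  have hak : a ≤ k := (hθ.le_iff_le ha hk).1 hs.1
  have hkb : k ≤ b := (hθ.le_iff_le hk hb).1 hs.2
  rcases hak.eq_or_lt with rfl | hak
  · exact .inl rfl
  rcases hkb.eq_or_lt with rfl | hkb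
  · exact .inr rfl
  exact (hmid k hak hkb hqR).elim

theorem exists_arc_of_brackets [TopologicalSpace Z] {α β : I → Z} (hα : Continuous α)
    (hαi : Function.Injective α) (hβ : Continuous β) (hβi : Function.Injective β) {n : ℕ}
    {τ θ : ℕ → I} (hτ : StrictMonoOn τ (Iio (3 * n))) (hθ : StrictMonoOn θ (Iio (3 * n)))
    {z : ℕ → Z} {s : Finset ℕ} (hs : ∀ i ∈ s, i < n)
    (hleft : ∀ i ∈ s, α (τ (3 * i)) = β (θ (3 * i)))
    (hright : ∀ i ∈ s, α (τ (3 * i + 2)) = β (θ (3 * i + 2)))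
    (hαz : ∀ i < n, i ∉ s → α (τ (3 * i + 1)) = z i)
    (hβz : ∀ i ∈ s, β (θ (3 * i + 1)) = z i)
    (hsep : ∀ i ∈ s, range α ∩ β '' Icc (θ (3 * i)) (θ (3 * i + 2)) ⊆
      {β (θ (3 * i)), β (θ (3 * i + 2))}) :
    ∃ γ : I → Z, Continuous γ ∧ Function.Injective γ ∧
      ∀ i < n, ∃ T ∈ Ioo (τ (3 * i)) (τ (3 * i + 2)), γ T = z i := by
  have hτlt : ∀ {j k}, j < k → k < 3 * n → τ j < τ k := fun hjk hk =>
    hτ (show _ < 3 * n by omega) hk hjk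
  have hθlt : ∀ {j k}, j < k → k < 3 * n → θ j < θ k := fun hjk hk =>
    hθ (show _ < 3 * n by omega) hk hjk
  have hsn : (s : Set ℕ) ⊆ Iio n := hs
  obtain ⟨γ, hγ, hγi, -, hγα, hγβ⟩ := exists_replaceSegments hα hαi hβ hβi s
    (u := fun i => τ (3 * i)) (v := fun i => τ (3 * i + 2))
    (p := fun i => θ (3 * i)) (q := fun i => θ (3 * i + 2))
    (fun i hi => hτlt (by omega) (by linarith [hs i hi]))
    (fun i hi => hθlt (by omega) (by linarith [hs i hi])) hleft hright
    (hτ.pairwiseDisjoint_Icc_three_mul.subset hsn) (hθ.pairwiseDisjoint_Icc_three_mul.subset hsn)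
    hsep
  refine ⟨γ, hγ, hγi, fun i hi => ?_⟩
  by_cases his : i ∈ s
  · exact hγβ i his ⟨θ (3 * i + 1), ⟨hθlt (by omega) (by omega), hθlt (by omega) (by omega)⟩,
      hβz i his⟩
  · have hmid : τ (3 * i + 1) ∈ Ioo (τ (3 * i)) (τ (3 * i + 2)) :=
      ⟨hτlt (by omega) (by omega), hτlt (by omega) (by omega)⟩
    refine ⟨τ (3 * i + 1), hmid, ?_⟩
    rw [hγα _ fun j hj hj' => ?_, hαz i hi his]
    have hij : i ≠ j := fun h => his (h ▸ hj)
    exact disjoint_left.1 (hτ.pairwiseDisjoint_Icc_three_mul hi (hs j hj) hij)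
      (Ioo_subset_Icc_self hmid) (Ioo_subset_Icc_self hj')

theorem exists_arc_of_bracketed_visits [TopologicalSpace Z] {X : Set Z} {α β : I → Z}
    (hα : Continuous α) (hαi : Function.Injective α) (hβ : Continuous β)
    (hβi : Function.Injective β) {n M : ℕ} (hM : 3 * n ≤ M) {τ θ : ℕ → I}
    (hτ : StrictMonoOn τ (Iio (3 * n))) (hθ : StrictMonoOn θ (Iio M)) {z f : ℕ → Z}
    (hατ : ∀ k < 3 * n, α (τ k) = bracketed z f X k)
    (hβθ : ∀ k < 3 * n, β (θ k) = bracketed z f Xᶜ k)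
    (hαX : range α ⊆ X) (hαβ : range α ∩ range β ⊆ (β ∘ θ) '' Iio M) :
    ∃ γ : I → Z, Continuous γ ∧ Function.Injective γ ∧
      ∀ i < n, ∃ T ∈ Ioo (τ (3 * i)) (τ (3 * i + 2)), γ T = z i := by
  classical
  set s := (Finset.range n).filter (z · ∉ X)
  have hs : ∀ i ∈ s, 3 * i + 2 < 3 * n ∧ z i ∉ X := fun i hi => by
    simp only [s, Finset.mem_filter, Finset.mem_range] at hi
    exact ⟨by omega, hi.2⟩
  refine exists_arc_of_brackets hα hαi hβ hβi hτ (hθ.mono (Iio_subset_Iio hM))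
    (fun i hi => by have := (hs i hi).1; omega) (fun i hi => ?_) (fun i hi => ?_)
    (fun i hi his => ?_) (fun i hi => ?_) fun i hi => ?_
  · have := (hs i hi).1
    rw [hατ _ (by omega), hβθ _ (by omega), bracketed_three_mul, bracketed_three_mul]
  · rw [hατ _ (hs i hi).1, hβθ _ (hs i hi).1, bracketed_three_mul_add_two,
      bracketed_three_mul_add_two]
  · have hzX : z i ∈ X := by_contra fun h => his (by simp [s, hi, h])
    rw [hατ _ (by omega), bracketed_three_mul_add_one hzX]
  · have := (hs i hi).1
    rw [hβθ _ (by omega), bracketed_three_mul_add_one (hs i hi).2]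
  · have := (hs i hi).1
    have hmid : β (θ (3 * i + 1)) = z i := by
      rw [hβθ _ (by omega), bracketed_three_mul_add_one (hs i hi).2]
    refine inter_image_Icc_subset_of_visits hβi hθ hαβ (by omega) (by omega)
      fun k hk hk' hkα => ?_
    obtain rfl : k = 3 * i + 1 := by omega
    exact (hs i hi).2 (hαX (hmid ▸ hkα))

theorem exists_arc_through_brackets [TopologicalSpace Z] {X Y : Set Z} (hunion : X ∪ Y = univ)
    (hX : OmegaSacPlus ↥X (Subtype.val ⁻¹' (X ∩ Y))) (hY : ∀ n : ℕ, 1 ≤ n → NSac ↥Y n)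
    {n : ℕ} (hn : 1 ≤ n) {z : ℕ → Z} (hz : InjOn z (Iio n)) {f : ℕ → Z}
    (hf : Function.Injective f) (hfXY : ∀ k, f k ∈ X ∩ Y) (hfz : ∀ k, ∀ i < n, f k ≠ z i) :
    ∃ γ : I → Z, Continuous γ ∧ Function.Injective γ ∧ ∃ τ : ℕ → I,
      StrictMonoOn τ (Iio (3 * n)) ∧ ∀ i < n, ∃ T ∈ Ioo (τ (3 * i)) (τ (3 * i + 2)), γ T = z i := by
  have hXc : Xᶜ ⊆ Y := fun q hq => (hunion ▸ mem_univ q).resolve_left hq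
  obtain ⟨α, τ, hαe, hαA, hτ, hατ⟩ := hX.exists_arc (N := 3 * n) (by omega)
    (x := fun k => ⟨bracketed z f X k, bracketed_mem subset_rfl (fun k => (hfXY k).1) k⟩)
    fun k hk l hl h => injOn_bracketed hz hf hfz hk hl (congrArg Subtype.val h)
  set D : Set Y := {q | (q : Z) ∈ range fun t => (α t : Z)}
  have hD : D.Finite := by
    refine ((hαA.image Subtype.val).preimage Subtype.val_injective.injOn).subset ?_
    rintro q ⟨t, ht⟩
    have ht : (α t : Z) = q := ht
    exact ⟨α t, ⟨mem_range_self t, (α t).2, ht ▸ q.2⟩, ht⟩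
  obtain ⟨M, β, θ, hM, hβe, hθ, hβθ, hDβ⟩ := exists_arc_through_then_finite hY (N := 3 * n)
    (by omega) (x := fun k => ⟨bracketed z f Xᶜ k, bracketed_mem hXc (fun k => (hfXY k).2) k⟩)
    (fun k hk l hl h => injOn_bracketed hz hf hfz hk hl (congrArg Subtype.val h)) hD
  have hια := IsEmbedding.subtypeVal.comp hαe
  have hιβ := IsEmbedding.subtypeVal.comp hβe
  have hαβ : range (Subtype.val ∘ α) ∩ range (Subtype.val ∘ β) ⊆
      (Subtype.val ∘ β ∘ θ) '' Iio M := by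
    rintro _ ⟨⟨t, rfl⟩, u, hu⟩
    obtain ⟨k, hk, hku⟩ := hDβ (show β u ∈ D from ⟨t, hu.symm⟩)
    exact ⟨k, hk, (congrArg Subtype.val hku).trans hu⟩
  obtain ⟨γ, hγ, hγi, hγz⟩ := exists_arc_of_bracketed_visits hια.continuous hια.injective
    hιβ.continuous hιβ.injective hM hτ hθ (fun k hk => congrArg Subtype.val (hατ k hk))
    (fun k hk => congrArg Subtype.val (hβθ k hk)) (by rintro _ ⟨t, rfl⟩; exact (α t).2) hαβ
  exact ⟨γ, hγ, hγi, τ, hτ, hγz⟩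

end

/-- (ω-Gluing Lemma) Let `Z = X ∪ Y` be Hausdorff with `A = X ∩ Y` infinite.
If `X` is `ω`-sac⁺ with respect to `A` and `Y` is `ω`-strongly arc connected,
then `Z` is `ω`-strongly arc connected. -/
theorem omega_gluing (Z : Type*) [TopologicalSpace Z] [T2Space Z] (X Y : Set Z)
    (hunion : X ∪ Y = Set.univ) (hinf : (X ∩ Y).Infinite)
    (hX : OmegaSacPlus ↥X (Subtype.val ⁻¹' (X ∩ Y)))
    (hY : ∀ n : ℕ, 1 ≤ n → NSac ↥Y n) :
    ∀ n : ℕ, 1 ≤ n → NSac Z n := by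
  intro n hn x hx
  set z : ℕ → Z := fun k => x ⟨k % n, Nat.mod_lt k hn⟩
  have hzx : ∀ i : Fin n, z i = x i := fun i => congrArg x (Fin.ext (Nat.mod_eq_of_lt i.2))
  have hz : InjOn z (Iio n) := fun k hk l hl h => by
    simpa [Nat.mod_eq_of_lt (show k < n from hk), Nat.mod_eq_of_lt (show l < n from hl)]
      using congrArg Fin.val (hx h)
  obtain ⟨f, hf, hfA⟩ : ∃ f : ℕ → Z, Function.Injective f ∧ ∀ k, f k ∈ (X ∩ Y) \ range x :=
    let e := (hinf.sdiff (finite_range x)).natEmbedding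
    ⟨fun k => e k, Subtype.val_injective.comp e.injective, fun k => (e k).2⟩
  obtain ⟨γ, hγ, hγi, τ, hτ, hγz⟩ := exists_arc_through_brackets hunion hX hY hn hz hf
    (fun k => (hfA k).1) fun k i _ h => (hfA k).2 ⟨_, h.symm⟩
  choose T hT hTz using fun i : Fin n => hγz i i.2
  refine ⟨γ, T, (hγ.isClosedEmbedding hγi).isEmbedding, fun i j hij => ?_,
    fun i => (hTz i).trans (hzx i)⟩
  have hij' : (i : ℕ) < j := hij
  calc T i < τ (3 * i + 2) := (hT i).2
    _ ≤ τ (3 * j) := hτ.monotoneOn (show _ < 3 * n by omega) (show _ < 3 * n by omega) (by omega)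
    _ < T j := (hT j).1
end
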